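/- arXiv:2406.18059 — 11 statements merged into one kernel-verified Lean document; each statement's English description precedes it below -/
import Mathlib

section
/- Let a_n = Σ_{k=0}^n C(n,k)^2·C(n+k,k)^2 be the Apéry numbers, let α be an integer, and define v_n(α) = Σ_{k=0}^n C(n,k)·(-α)^{n-k}·a_k. Then the sequence (v_n(α))_{n≥0} satisfies the Gauss congruences: for every prime p and all positive integers n and r, v_{n·p^r}(α) ≡ v_{n·p^{r-1}}(α) (mod p^r). -/
/-!
Write `φ = (1+x)(1+y)(1+z)(x(1+y)(1+z) + yz)`. Expanding the second factor binomially shows that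
the coefficient of `(xyz)ⁿ` in `φⁿ` is `∑ₖ C(n,k) C(n,n-k) C(n+k,k)² = aₙ`, and then that the
coefficient of `(xyz)ⁿ` in `(φ - α xyz)ⁿ` is `vₙ(α)`. The Gauss congruences hold for the diagonal
coefficients of the powers of any integer polynomial `ψ`: from `ψ^p ≡ ψ(x^p, y^p, z^p) (mod p)` one
gets `ψ^(n p^r) ≡ ψ(x^p, y^p, z^p)^(n p^(r-1)) (mod p^r)`, and the coefficient of `(xyz)^(n p^r)` on
the right is the coefficient of `(xyz)^(n p^(r-1))` in `ψ^(n p^(r-1))`.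
-/

/-- The Apéry numbers `aₙ = ∑ₖ C(n,k)² C(n+k,k)²`. -/
def apery (n : ℕ) : ℤ :=
  ∑ k ∈ Finset.range (n + 1), (n.choose k : ℤ) ^ 2 * ((n + k).choose k : ℤ) ^ 2

/-- The binomial transform of an integer sequence `u` at `α`. -/
def binomialTransform (u : ℕ → ℤ) (α : ℤ) (n : ℕ) : ℤ :=
  ∑ k ∈ Finset.range (n + 1), (n.choose k : ℤ) * (-α) ^ (n - k) * u k

open Finset

namespace MvPolynomial

variable {σ : Type*}

theorem natCast_dvd_pow_sub_expand (p : ℕ) [Fact p.Prime] (φ : MvPolynomial σ ℤ) :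
    (p : MvPolynomial σ ℤ) ∣ φ ^ p - expand p φ := by
  rw [← map_natCast C, C_dvd_iff_dvd_coeff]
  intro d
  have hmap : map (Int.castRingHom (ZMod p)) (φ ^ p - expand p φ) = 0 := by
    rw [map_sub, map_pow, map_expand, ← frobenius_zmod, frobenius_def, sub_self]
  have := congrArg (coeff d) hmap
  rw [coeff_map, coeff_zero, eq_intCast, ZMod.intCast_zmod_eq_zero_iff_dvd] at this
  exact_mod_cast this

theorem pow_succ_dvd_pow_sub_expand_pow (p : ℕ) [Fact p.Prime] (φ : MvPolynomial σ ℤ)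
    (n r : ℕ) :
    (p : MvPolynomial σ ℤ) ^ (r + 1) ∣ φ ^ (n * p ^ (r + 1)) - expand p (φ ^ (n * p ^ r)) := by
  have h := (dvd_sub_pow_of_dvd_sub (natCast_dvd_pow_sub_expand p φ) r).trans
    (sub_dvd_pow_sub_pow _ _ n)
  convert h using 2
  · rw [← pow_mul, ← pow_mul]; ring
  · rw [map_pow, ← pow_mul, mul_comm]

theorem coeff_pow_mul_prime_pow_modEq (p : ℕ) [Fact p.Prime] (φ : MvPolynomial σ ℤ)
    (d : σ →₀ ℕ) (n r : ℕ) :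
    coeff ((n * p ^ (r + 1)) • d) (φ ^ (n * p ^ (r + 1))) ≡
      coeff ((n * p ^ r) • d) (φ ^ (n * p ^ r)) [ZMOD p ^ (r + 1)] := by
  have h := pow_succ_dvd_pow_sub_expand_pow p φ n r
  rw [← map_natCast C, ← map_pow, C_dvd_iff_dvd_coeff] at h
  have hd : (n * p ^ (r + 1)) • d = p • (n * p ^ r) • d := by
    rw [smul_smul, pow_succ]; ring_nf
  rw [← Int.natCast_pow]
  refine (Int.modEq_iff_dvd.mpr ?_).symm
  simpa [hd, ← map_pow, coeff_expand_smul _ (Fact.out : p.Prime).ne_zero] using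
    h ((n * p ^ (r + 1)) • d)

theorem coeff_nsmul_pow_sub_monomial (φ : MvPolynomial σ ℤ) (d : σ →₀ ℕ) (α : ℤ) (n : ℕ) :
    coeff (n • d) ((φ - monomial d α) ^ n) =
      binomialTransform (fun k ↦ coeff (k • d) (φ ^ k)) α n := by
  rw [sub_eq_add_neg, ← map_neg, add_pow, coeff_sum, binomialTransform]
  refine sum_congr rfl fun k hk ↦ ?_
  have hnk : n • d = k • d + (n - k) • d := by
    rw [← add_nsmul, Nat.add_sub_cancel' (Nat.lt_succ_iff.mp (mem_range.mp hk))]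
  rw [monomial_pow, ← Nat.cast_comm, mul_assoc, ← C_eq_coe_nat, coeff_C_mul, hnk,
    coeff_mul_monomial]
  ring

theorem coeff_prod_one_add_X_pow {R : Type*} [CommSemiring R] [Fintype σ] (m : σ → ℕ)
    (d : σ →₀ ℕ) :
    coeff d (∏ i, (1 + X i) ^ m i : MvPolynomial σ R) = ∏ i, ((m i).choose (d i) : R) := by
  classical
  have h (i : σ) : (1 + X i : MvPolynomial σ R) ^ m i =
      ∑ j ∈ range (m i + 1), monomial (Finsupp.single i j) ((m i).choose j : R) := by
    rw [add_comm, add_pow]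
    refine sum_congr rfl fun j _ ↦ ?_
    rw [one_pow, mul_one, X_pow_eq_monomial, ← C_eq_coe_nat, mul_comm, C_mul_monomial, mul_one]
  simp_rw [h, prod_univ_sum, ← monomial_sum_prod, coeff_sum, coeff_monomial]
  have hx (x : σ → ℕ) : ∑ i, Finsupp.single i (x i) = d ↔ x = d := by
    rw [← Finsupp.equivFunOnFinite_symm_eq_sum, Equiv.symm_apply_eq]; rfl
  simp_rw [hx, sum_ite_eq']
  split_ifs with hd
  · rfl
  · obtain ⟨i, hi⟩ : ∃ i, m i < d i := by simpa [Nat.lt_succ_iff] using hd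
    exact (prod_eq_zero (mem_univ i) (by simp [Nat.choose_eq_zero_of_lt hi])).symm

end MvPolynomial

open MvPolynomial

noncomputable def aperyPoly : MvPolynomial (Fin 3) ℤ :=
  (1 + X 0) * (1 + X 1) * (1 + X 2) * (X 0 * (1 + X 1) * (1 + X 2) + X 1 * X 2)

theorem aperyPoly_pow (n : ℕ) :
    aperyPoly ^ n = ∑ k ∈ range (n + 1),
      monomial (Finsupp.equivFunOnFinite.symm ![k, n - k, n - k]) (n.choose k : ℤ) *
        ∏ i, (1 + X i) ^ ![n, n + k, n + k] i := by
  rw [aperyPoly, mul_pow, add_pow, mul_sum]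
  refine sum_congr rfl fun k _ ↦ ?_
  rw [monomial_eq, Finsupp.prod_fintype _ _ (by simp)]
  simp only [Fin.prod_univ_three, Finsupp.coe_equivFunOnFinite_symm, Matrix.cons_val, map_natCast,
    mul_pow, pow_add]
  ring

theorem coeff_aperyPoly_pow (n : ℕ) :
    coeff (n • Finsupp.equivFunOnFinite.symm 1) (aperyPoly ^ n) = apery n := by
  rw [aperyPoly_pow, coeff_sum, apery]
  refine sum_congr rfl fun k hk ↦ ?_
  have hkn : k ≤ n := Nat.lt_succ_iff.mp (mem_range.mp hk)
  rw [coeff_monomial_mul', if_pos, coeff_prod_one_add_X_pow, Fin.prod_univ_three]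
  · simp only [Matrix.cons_val, Finsupp.coe_tsub, Finsupp.coe_smul,
      Finsupp.coe_equivFunOnFinite_symm, Pi.sub_apply, Pi.smul_apply, Pi.one_apply, smul_eq_mul,
      mul_one, Nat.sub_sub_self hkn, Nat.choose_symm hkn]
    ring
  · intro i
    fin_cases i <;> simp [hkn]

/-- The binomial transform of the Apéry numbers satisfies the Gauss congruences. -/
theorem apery_binomialTransform_gauss (α : ℤ) :
    ∀ p : ℕ, p.Prime → ∀ n r : ℕ, 0 < n → 0 < r →
      binomialTransform apery α (n * p ^ r) ≡
        binomialTransform apery α (n * p ^ (r - 1)) [ZMOD (p : ℤ) ^ r] := by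
  intro p hp n r _ hr
  have : Fact p.Prime := ⟨hp⟩
  obtain ⟨r, rfl⟩ : ∃ s, r = s + 1 := ⟨r - 1, by omega⟩
  have hdiag (m : ℕ) : binomialTransform apery α m =
      coeff (m • Finsupp.equivFunOnFinite.symm 1)
        ((aperyPoly - monomial (Finsupp.equivFunOnFinite.symm 1) α) ^ m) := by
    rw [coeff_nsmul_pow_sub_monomial, funext coeff_aperyPoly_pow]
  rw [Nat.add_sub_cancel, hdiag, hdiag]
  exact coeff_pow_mul_prime_pow_modEq p _ _ n r
end

section
/- Let f_n = Σ_{k=0}^n C(n,k)^3 be the Franel numbers, let α be an integer, and define v_n(α) = Σ_{k=0}^n C(n,k)·(-α)^{n-k}·f_k. Then the sequence (v_n(α))_{n≥0} satisfies the Gauss congruences: for every prime p and all positive integers n and r, v_{n·p^r}(α) ≡ v_{n·p^{r-1}}(α) (mod p^r). -/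
/-!
The Franel number `fₙ` is the constant term of `Pⁿ` for the Laurent polynomial
`P = (1 + x)(1 + y)(1 + x⁻¹y⁻¹)`, hence `vₙ(α)` is the constant term of `(P - α)ⁿ`.
For every Laurent polynomial `A` with integer coefficients, `A ^ p ≡ A(xᵖ, yᵖ) (mod p)`
(the Frobenius is additive mod `p`, and `cᵖ ≡ c` on coefficients); raising this to the power
`p ^ (r - 1)` gives `A ^ p ^ r ≡ A(xᵖ, yᵖ) ^ p ^ (r - 1) (mod p ^ r)`, and the substitution
`x ↦ xᵖ, y ↦ yᵖ` does not change constant terms. Take `A = (P - α) ^ n`.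
-/

/-- The Franel numbers `fₙ = ∑ₖ C(n,k)³`. -/
def franel (n : ℕ) : ℤ :=
  ∑ k ∈ Finset.range (n + 1), (n.choose k : ℤ) ^ 3

open AddMonoidAlgebra

namespace AddMonoidAlgebra

variable {G : Type*}

lemma one_add_single_pow [AddMonoid G] {R : Type*} [CommSemiring R] (g : G) (n : ℕ) :
    (1 + single g (1 : R)) ^ n = ∑ k ∈ Finset.range (n + 1), single (k • g) (n.choose k : R) := by
  rw [add_comm, (Commute.one_right _).add_pow]
  refine Finset.sum_congr rfl fun k _ ↦ ?_
  rw [single_pow, one_pow, one_pow, mul_one, natCast_def, single_mul_single, add_zero, one_mul]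

lemma natCast_dvd_coeff [AddMonoid G] {R : Type*} [CommSemiring R] {m : ℕ} {x : R[G]}
    (h : (m : R[G]) ∣ x) (g : G) : (m : R) ∣ x.coeff g := by
  obtain ⟨y, rfl⟩ := h
  rw [natCast_def, coeff_single_zero_mul]
  exact dvd_mul_right _ _

variable [AddCommMonoid G]

section Expand

variable {R : Type*} [Semiring R]

variable (R) in
noncomputable def expand (p : ℕ) : R[G] →+* R[G] :=
  mapDomainRingHom R (nsmulAddMonoidHom p)

@[simp]
lemma expand_single (p : ℕ) (g : G) (r : R) : expand R p (single g r) = single (p • g) r := by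
  simp [expand]

lemma coeff_zero_expand [IsAddTorsionFree G] {p : ℕ} (hp : p ≠ 0) (x : R[G]) :
    (expand R p x).coeff 0 = x.coeff 0 := by
  simpa [expand] using Finsupp.mapDomain_apply (f := nsmulAddMonoidHom p)
    (IsAddTorsionFree.nsmul_right_injective hp) x.coeff 0

end Expand

theorem natCast_dvd_pow_sub_expand {p : ℕ} (hp : p.Prime) (x : ℤ[G]) :
    (p : ℤ[G]) ∣ x ^ p - expand ℤ p x := by
  induction x using induction_linear with
  | zero => simp [hp.ne_zero]
  | add x y hx hy =>
    obtain ⟨z, hz⟩ := exists_add_pow_prime_eq hp x y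
    have hsplit : (x + y) ^ p - expand ℤ p (x + y) =
        (x ^ p - expand ℤ p x) + (y ^ p - expand ℤ p y) + p * (x * y * z) := by
      rw [hz, map_add]
      ring
    rw [hsplit]
    exact dvd_add (dvd_add hx hy) (dvd_mul_right _ _)
  | single g c =>
    obtain ⟨d, hd⟩ := (Int.ModEq.pow_prime_eq_self hp c).symm.dvd
    refine ⟨single (p • g) d, ?_⟩
    rw [single_pow, expand_single, ← single_sub, hd, natCast_def, single_mul_single, zero_add]

theorem coeff_zero_pow_prime_pow_modEq [IsAddTorsionFree G] {p : ℕ} (hp : p.Prime) (x : ℤ[G])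
    (r : ℕ) : (x ^ p ^ (r + 1)).coeff 0 ≡ (x ^ p ^ r).coeff 0 [ZMOD (p : ℤ) ^ (r + 1)] := by
  have h := dvd_sub_pow_of_dvd_sub (natCast_dvd_pow_sub_expand hp x) r
  rw [← pow_mul, ← pow_succ', ← map_pow, ← Nat.cast_pow] at h
  have hcoeff := natCast_dvd_coeff h 0
  rw [coeff_sub, Finsupp.sub_apply, coeff_zero_expand hp.ne_zero] at hcoeff
  exact (Int.modEq_iff_dvd.mpr (by exact_mod_cast hcoeff)).symm

end AddMonoidAlgebra

lemma binomialTransform_coeff_pow {G : Type*} [AddCommMonoid G] (x : ℤ[G]) (α : ℤ) (n : ℕ)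
    (g : G) : binomialTransform (fun k ↦ (x ^ k).coeff g) α n = ((x - α) ^ n).coeff g := by
  rw [sub_eq_add_neg, add_pow, coeff_sum, Finset.sum_apply', binomialTransform]
  refine Finset.sum_congr rfl fun k _ ↦ ?_
  rw [← Int.cast_neg, ← Int.cast_pow, intCast_def, natCast_def, mul_assoc (x ^ k),
    single_mul_single, zero_add, coeff_mul_single_zero]
  push_cast
  ring

noncomputable def franelPoly : ℤ[ℤ × ℤ] :=
  (1 + single (1, 0) 1) * (1 + single (0, 1) 1) * (1 + single (-1, -1) 1)

lemma coeff_zero_franelPoly_pow (n : ℕ) : (franelPoly ^ n).coeff 0 = franel n := by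
  simp only [franelPoly, mul_pow, one_add_single_pow, Finset.sum_mul, Finset.mul_sum,
    single_mul_single, coeff_sum, Finset.sum_apply', coeff_single, Finsupp.single_apply]
  -- the term `(a, b, c)` sits at `xᵃ⁻ᶜ yᵇ⁻ᶜ`, so only `a = b = c` reaches the constant term
  simp +contextual [Prod.ext_iff, add_neg_eq_zero, ite_and, Finset.sum_ite_eq', franel,
    pow_three, mul_assoc]

/-- The binomial transform of the Franel numbers satisfies the Gauss congruences. -/
theorem franel_binomialTransform_gauss (α : ℤ) :
    ∀ p : ℕ, p.Prime → ∀ n r : ℕ, 0 < n → 0 < r →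
      binomialTransform franel α (n * p ^ r) ≡
        binomialTransform franel α (n * p ^ (r - 1)) [ZMOD (p : ℤ) ^ r] := by
  intro p hp n r _ hr
  obtain ⟨r, rfl⟩ : ∃ s, r = s + 1 := ⟨r - 1, by omega⟩
  have hfranel : franel = fun k ↦ (franelPoly ^ k).coeff 0 :=
    funext fun k ↦ (coeff_zero_franelPoly_pow k).symm
  rw [hfranel, binomialTransform_coeff_pow, binomialTransform_coeff_pow, Nat.add_sub_cancel,
    pow_mul, pow_mul]
  exact coeff_zero_pow_prime_pow_modEq hp _ r
end

section
/- Let a_n = Σ_{k=0}^n C(n,k)^2·C(n+k,k)^2 be the Apéry numbers and α an integer. Define v_n(α) = Σ_{k=0}^n C(n,k)·(-α)^{n-k}·a_k and let M = gcd(v_1(α), v_2(α), v_3(α), v_4(α)) (a non-negative integer). Then for all integers n ≥ 0, a_n ≡ α^n modulo the largest square-free divisor of M (interpreted as 1 if M = 0), i.e. modulo the radical of M. -/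
/-- The radical (largest square-free divisor) of a natural number:
the product of its distinct prime factors; the radical of `0` is `1`. -/
def natRadical (M : ℕ) : ℕ := ∏ p ∈ M.primeFactors, p


/-!
Modulo a prime `p`, Lucas' theorem splits each summand `(C(n,k) C(n+k,k))²` of the Apéry number
along the last base-`p` digits of `n` and `k`, which gives the Lucas property
`a_{pm+r} ≡ a_r a_m (mod p)` for `r < p`. For `p = 2, 3` the first digits satisfy `a_r ≡ 5^r`,
hence `a_n ≡ 5^n (mod 6)`. On the other hand `v₁(α) = 5 - α` and
`24 = v₃ - 12 v₂ - (α² + 2α + 109) v₁`, so `M ∣ 24`: the radical of `M` divides both `6`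
and `5 - α`.
-/

open Finset

theorem Finset.sum_range_mul_eq_sum_sum {M : Type*} [AddCommMonoid M] (f : ℕ → M) (p m : ℕ) :
    ∑ k ∈ range (p * m), f k = ∑ j ∈ range m, ∑ s ∈ range p, f (p * j + s) := by
  induction m with
  | zero => simp
  | succ m ih => rw [Nat.mul_succ, sum_range_add, ih, sum_range_succ]

def aperyTerm (n k : ℕ) : ℕ := (n.choose k * (n + k).choose k) ^ 2

theorem apery_eq_sum_range_aperyTerm {n N : ℕ} (h : n < N) :
    apery n = ∑ k ∈ range N, (aperyTerm n k : ℤ) := by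
  rw [apery]
  push_cast [aperyTerm, mul_pow]
  refine sum_subset (range_subset_range.mpr h) fun k _ hk => ?_
  simp [Nat.choose_eq_zero_of_lt (not_lt.mp (mem_range.not.mp hk))]

section Lucas

variable {p : ℕ} [Fact p.Prime]

theorem natCast_choose_mul_add (a b : ℕ) {r s : ℕ} (hr : r < p) (hs : s < p) :
    (((p * a + r).choose (p * b + s) : ℕ) : ZMod p) = r.choose s * a.choose b := by
  have hp : 0 < p := Fact.out (p := p.Prime) |>.pos
  have h := (ZMod.intCast_eq_intCast_iff _ _ _).mpr
    (Choose.choose_modEq_choose_mod_mul_choose_div (n := p * a + r) (k := p * b + s) (p := p))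
  push_cast at h
  rwa [Nat.mul_add_mod, Nat.mul_add_mod, Nat.mod_eq_of_lt hr, Nat.mod_eq_of_lt hs,
    Nat.mul_add_div hp, Nat.mul_add_div hp, Nat.div_eq_of_lt hr, Nat.div_eq_of_lt hs,
    add_zero, add_zero] at h

/-- A carry in the last digit of `n + k` kills `C(n + k, k)` modulo `p`. -/
theorem natCast_choose_mul_add_eq_zero_of_le (a b : ℕ) {r s : ℕ} (hr : r < p) (hs : s < p)
    (hrs : p ≤ r + s) : (((p * a + (r + s)).choose (p * b + s) : ℕ) : ZMod p) = 0 := by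
  have hsplit : p * a + (r + s) = p * (a + 1) + (r + s - p) := by rw [Nat.mul_succ]; omega
  rw [hsplit, natCast_choose_mul_add _ _ (by omega) hs, Nat.choose_eq_zero_of_lt (by omega),
    Nat.cast_zero, zero_mul]

theorem natCast_aperyTerm_mul_add (m j : ℕ) {r s : ℕ} (hr : r < p) (hs : s < p) :
    (aperyTerm (p * m + r) (p * j + s) : ZMod p) = aperyTerm r s * aperyTerm m j := by
  have hsum : p * m + r + (p * j + s) = p * (m + j) + (r + s) := by ring
  push_cast [aperyTerm]
  rw [hsum, natCast_choose_mul_add _ _ hr hs]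
  by_cases hrs : r + s < p
  · rw [natCast_choose_mul_add _ _ hrs hs]
    ring
  · have hcarry := natCast_choose_mul_add_eq_zero_of_le 0 0 hr hs (not_lt.mp hrs)
    simp only [mul_zero, zero_add] at hcarry
    rw [natCast_choose_mul_add_eq_zero_of_le _ _ hr hs (not_lt.mp hrs), hcarry]
    ring

theorem natCast_apery_mul_add (m : ℕ) {r : ℕ} (hr : r < p) :
    (apery (p * m + r) : ZMod p) = apery r * apery m := by
  rw [apery_eq_sum_range_aperyTerm (N := p * (m + 1)) (by rw [Nat.mul_succ]; omega),
    apery_eq_sum_range_aperyTerm hr, apery_eq_sum_range_aperyTerm m.lt_succ_self]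
  push_cast
  rw [sum_range_mul_eq_sum_sum, sum_comm, sum_mul_sum]
  exact sum_congr rfl fun s hs => sum_congr rfl fun j _ =>
    natCast_aperyTerm_mul_add m j hr (mem_range.mp hs)

theorem natCast_apery_eq_pow {c : ZMod p} (h : ∀ r < p, (apery r : ZMod p) = c ^ r) (n : ℕ) :
    (apery n : ZMod p) = c ^ n := by
  have hp : 1 < p := Fact.out (p := p.Prime) |>.one_lt
  induction n using Nat.strong_induction_on with
  | _ n ih =>
    rcases n.eq_zero_or_pos with rfl | hn
    · simpa using h 0 (by omega)
    · rw [← Nat.div_add_mod n p, natCast_apery_mul_add _ (n.mod_lt (by omega)),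
        h _ (n.mod_lt (by omega)), ih _ (Nat.div_lt_self hn hp), pow_add, pow_mul, ZMod.pow_card,
        mul_comm]

end Lucas

theorem apery_modEq_five_pow_of_prime {p : ℕ} [Fact p.Prime]
    (h : ∀ r < p, apery r ≡ 5 ^ r [ZMOD p]) (n : ℕ) : apery n ≡ 5 ^ n [ZMOD p] := by
  have h' (r : ℕ) (hr : r < p) : (apery r : ZMod p) = 5 ^ r := by
    exact_mod_cast (ZMod.intCast_eq_intCast_iff _ _ _).mpr (h r hr)
  rw [← ZMod.intCast_eq_intCast_iff]
  exact_mod_cast natCast_apery_eq_pow h' n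

theorem apery_modEq_five_pow (n : ℕ) : apery n ≡ 5 ^ n [ZMOD 6] := by
  have hmod2 : apery n ≡ 5 ^ n [ZMOD (2 : ℕ)] :=
    apery_modEq_five_pow_of_prime (by intro r hr; interval_cases r <;> decide) n
  have hmod3 : apery n ≡ 5 ^ n [ZMOD (3 : ℕ)] :=
    apery_modEq_five_pow_of_prime (by intro r hr; interval_cases r <;> decide) n
  exact (Int.modEq_and_modEq_iff_modEq_mul (by norm_num)).mp ⟨hmod2, hmod3⟩

theorem apery_zero : apery 0 = 1 := rfl

theorem apery_one : apery 1 = 5 := rfl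

theorem apery_two : apery 2 = 73 := rfl

theorem apery_three : apery 3 = 1445 := rfl

theorem binomialTransform_apery_one (α : ℤ) : binomialTransform apery α 1 = 5 - α := by
  simp only [binomialTransform, sum_range_succ, sum_range_zero, apery_zero, apery_one]
  norm_num
  ring

theorem binomialTransform_apery_two (α : ℤ) :
    binomialTransform apery α 2 = α ^ 2 - 10 * α + 73 := by
  simp only [binomialTransform, sum_range_succ, sum_range_zero, apery_zero, apery_one, apery_two]
  norm_num
  ring

theorem binomialTransform_apery_three (α : ℤ) :
    binomialTransform apery α 3 = -α ^ 3 + 15 * α ^ 2 - 219 * α + 1445 := by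
  simp only [binomialTransform, sum_range_succ, sum_range_zero, apery_zero, apery_one, apery_two,
    apery_three]
  norm_num
  ring

theorem dvd_twentyFour_of_dvd_binomialTransform_apery {α d : ℤ}
    (h1 : d ∣ binomialTransform apery α 1) (h2 : d ∣ binomialTransform apery α 2)
    (h3 : d ∣ binomialTransform apery α 3) : d ∣ 24 := by
  have hcomb : (24 : ℤ) = binomialTransform apery α 3 - 12 * binomialTransform apery α 2
      - (α ^ 2 + 2 * α + 109) * binomialTransform apery α 1 := by
    rw [binomialTransform_apery_one, binomialTransform_apery_two, binomialTransform_apery_three]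
    ring
  rw [hcomb]
  exact (h3.sub (h2.mul_left _)).sub (h1.mul_left _)

theorem natRadical_dvd_self (M : ℕ) : natRadical M ∣ M := Nat.prod_primeFactors_dvd M

theorem natRadical_dvd_of_dvd_pow {M k e : ℕ} (hk : k ≠ 0) (he : e ≠ 0) (h : M ∣ k ^ e) :
    natRadical M ∣ k :=
  (Nat.prod_primeFactors_dvd_iff hk).mpr
    ((Nat.primeFactors_mono h (pow_ne_zero e hk)).trans_eq (Nat.primeFactors_pow k he))

/-- With `M = gcd(v₁(α), v₂(α), v₃(α), v₄(α))` for the binomial transform `v` of the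
Apéry numbers, we have `aₙ ≡ αⁿ` modulo the radical of `M` for all `n ≥ 0`. -/
theorem apery_modEq_radical (α : ℤ) :
    ∀ n : ℕ, apery n ≡ α ^ n
      [ZMOD (natRadical (Int.gcd (binomialTransform apery α 1)
        (Int.gcd (binomialTransform apery α 2)
          (Int.gcd (binomialTransform apery α 3) (binomialTransform apery α 4)))) : ℤ)] := by
  intro n
  set M := Int.gcd (binomialTransform apery α 1) (Int.gcd (binomialTransform apery α 2)
    (Int.gcd (binomialTransform apery α 3) (binomialTransform apery α 4)))
  have hv1 : (M : ℤ) ∣ binomialTransform apery α 1 := Int.gcd_dvd_left _ _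
  have hv234 := Int.gcd_dvd_right (binomialTransform apery α 1)
    (Int.gcd (binomialTransform apery α 2)
      (Int.gcd (binomialTransform apery α 3) (binomialTransform apery α 4)))
  have hv2 : (M : ℤ) ∣ binomialTransform apery α 2 := hv234.trans (Int.gcd_dvd_left _ _)
  have hv3 : (M : ℤ) ∣ binomialTransform apery α 3 :=
    hv234.trans ((Int.gcd_dvd_right _ _).trans (Int.gcd_dvd_left _ _))
  have hM : M ∣ 6 ^ 3 := (Int.natCast_dvd_ofNat.mp
    (dvd_twentyFour_of_dvd_binomialTransform_apery hv1 hv2 hv3)).trans (by norm_num)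
  have hrad : natRadical M ∣ 6 := natRadical_dvd_of_dvd_pow (by norm_num) (by norm_num) hM
  have hα : α ≡ 5 [ZMOD natRadical M] := Int.modEq_iff_dvd.mpr
    ((Int.natCast_dvd_natCast.mpr (natRadical_dvd_self M)).trans
      (binomialTransform_apery_one α ▸ hv1))
  exact ((apery_modEq_five_pow n).of_dvd (by exact_mod_cast hrad)).trans (hα.pow n).symm
end

section
/- Let a_n = Σ_{k=0}^n C(n,k)^2·C(n+k,k)^2 be the Apéry numbers. If α is an integer and N a positive integer such that a_n ≡ α^n (mod N) for all integers n ≥ 0, then N divides 24. -/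
/-- If `aₙ ≡ αⁿ (mod N)` for all `n ≥ 0`, then `N` divides `24`. -/
theorem apery_modulus_dvd_24 (α : ℤ) (N : ℤ) (hN : 0 < N)
    (h : ∀ n : ℕ, apery n ≡ α ^ n [ZMOD N]) : N ∣ 24 := by
  have e1 : apery 1 = 5 := by decide
  have e2 : apery 2 = 73 := by decide
  have e3 : apery 3 = 1445 := by decide
  have d1 : N ∣ α ^ 1 - 5 := by
    have := (h 1).dvd; rwa [e1] at this
  have d2 : N ∣ α ^ 2 - 73 := by
    have := (h 2).dvd; rwa [e2] at this
  have d3 : N ∣ α ^ 3 - 1445 := by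
    have := (h 3).dvd; rwa [e3] at this
  have h48 : N ∣ 48 := by
    have : (48 : ℤ) = (α + 5) * (α ^ 1 - 5) - (α ^ 2 - 73) := by ring
    rw [this]; exact dvd_sub (d1.mul_left _) d2
  have h1320 : N ∣ 1320 := by
    have : (1320 : ℤ) = (α ^ 2 + 5 * α + 25) * (α ^ 1 - 5) - (α ^ 3 - 1445) := by ring
    rw [this]; exact dvd_sub (d1.mul_left _) d3
  have : (24 : ℤ) = 1320 - 27 * 48 := by norm_num
  rw [this]; exact dvd_sub h1320 (h48.mul_left _)
end

section
/- Let b_n = Σ_{k=0}^n C(n,k)^2·C(n+k,k) be the Apéry numbers of the second kind. If α is an integer and N a positive integer such that b_n ≡ α^n (mod N) for all integers n ≥ 0, then N divides 10. -/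
/-- The Apéry numbers of the second kind `bₙ = ∑ₖ C(n,k)² C(n+k,k)`. -/
def aperyB (n : ℕ) : ℤ :=
  ∑ k ∈ Finset.range (n + 1), (n.choose k : ℤ) ^ 2 * ((n + k).choose k : ℤ)

/-- If `bₙ ≡ αⁿ (mod N)` for all `n ≥ 0`, then `N` divides `10`. -/
theorem aperyB_modulus_dvd_10 (α : ℤ) (N : ℤ) (hN : 0 < N)
    (h : ∀ n : ℕ, aperyB n ≡ α ^ n [ZMOD N]) : N ∣ 10 := by
  have h1 := h 1
  have h2 := h 2
  norm_num [aperyB, Finset.sum_range_succ] at h1 h2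
  have h3 : (9:ℤ) ≡ α ^ 2 [ZMOD N] := by
    calc (9:ℤ) = 3 ^ 2 := by norm_num
    _ ≡ α ^ 2 [ZMOD N] := h1.pow 2
  have h4 : (19:ℤ) ≡ 9 [ZMOD N] := h2.trans h3.symm
  have h5 : N ∣ (9 - 19 : ℤ) := h4.dvd
  have : N ∣ (-10 : ℤ) := by norm_num at h5 ⊢; exact h5
  exact (dvd_neg).mp this
end

section
/- For all integers n ≥ 0, the Apéry number of the second kind b_n = Σ_{k=0}^n C(n,k)^2·C(n+k,k) satisfies b_n ≡ 3^n (mod 10). -/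
open Finset

theorem keyL (p : ℕ) [Fact p.Prime] (n₀ n₁ i j : ℕ) (hj : j < p) (hn₀ : n₀ < p) :
    (((p * n₁ + n₀) + (p * i + j)).choose (p * i + j) : ℤ) ≡
      ((n₁ + i).choose i : ℤ) * ((n₀ + j).choose j : ℤ) [ZMOD p] := by
  have hp : 0 < p := (Fact.out : p.Prime).pos
  have key := Choose.choose_modEq_choose_mod_mul_choose_div
    (p := p) (n := (p * n₁ + n₀) + (p * i + j)) (k := p * i + j)
  have e3 : (p * i + j) % p = j := by
    rw [show p * i + j = j + p * i by ring, Nat.add_mul_mod_self_left, Nat.mod_eq_of_lt hj]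
  have e4 : (p * i + j) / p = i := by
    rw [show p * i + j = j + p * i by ring, Nat.add_mul_div_left _ _ hp, Nat.div_eq_of_lt hj,
      zero_add]
  have emod : ((p * n₁ + n₀) + (p * i + j)) % p = (n₀ + j) % p := by
    rw [show (p * n₁ + n₀) + (p * i + j) = (n₀ + j) + p * (n₁ + i) by ring,
      Nat.add_mul_mod_self_left]
  have ediv : ((p * n₁ + n₀) + (p * i + j)) / p = (n₀ + j) / p + (n₁ + i) := by
    rw [show (p * n₁ + n₀) + (p * i + j) = (n₀ + j) + p * (n₁ + i) by ring,
      Nat.add_mul_div_left _ _ hp]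
  rcases lt_or_ge (n₀ + j) p with h | h
  · rw [emod, ediv, e3, e4, Nat.mod_eq_of_lt h, Nat.div_eq_of_lt h, zero_add] at key
    exact key.trans (by push_cast; ring_nf; exact Int.ModEq.refl _)
  · -- carry case: both sides ≡ 0
    have f1 : (n₀ + j) % p = n₀ + j - p := by
      rw [Nat.mod_eq_sub_mod h, Nat.mod_eq_of_lt (by omega)]
    have hz : (n₀ + j - p).choose j = 0 := Nat.choose_eq_zero_of_lt (by omega)
    rw [emod, e3, f1, hz] at key
    simp only [Nat.cast_zero, zero_mul] at key
    have key2 := Choose.choose_modEq_choose_mod_mul_choose_div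
      (p := p) (n := n₀ + j) (k := j)
    rw [f1, Nat.mod_eq_of_lt hj, hz] at key2
    have h2 : ((n₀ + j).choose j : ℤ) ≡ 0 [ZMOD p] := by simpa using key2
    exact key.trans (by simpa using ((Int.ModEq.refl (((n₁ + i).choose i : ℤ))).mul h2).symm)

private def B (n : ℕ) : ℤ :=
  ∑ k ∈ Finset.range (n + 1), (n.choose k : ℤ) ^ 2 * ((n + k).choose k : ℤ)

theorem keyZ (p : ℕ) [Fact p.Prime] (n₀ n₁ i j : ℕ) (hj : j < p) (hn₀ : n₀ < p) :
    ((((p * n₁ + n₀) + (p * i + j)).choose (p * i + j) : ℕ) : ZMod p) =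
      ((n₁ + i).choose i : ℕ) * ((n₀ + j).choose j : ℕ) := by
  have := (ZMod.intCast_eq_intCast_iff _ _ _).mpr (keyL p n₀ n₁ i j hj hn₀)
  push_cast at this ⊢
  exact this

theorem chooseZ (p : ℕ) [Fact p.Prime] (n k : ℕ) :
    ((n.choose k : ℕ) : ZMod p) = ((n % p).choose (k % p) : ℕ) * ((n / p).choose (k / p) : ℕ) := by
  have := (ZMod.intCast_eq_intCast_iff _ _ _).mpr
    (Choose.choose_modEq_choose_mod_mul_choose_div (p := p) (n := n) (k := k))
  push_cast at this ⊢
  exact this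

theorem B_lucas (p : ℕ) [Fact p.Prime] (n : ℕ) :
    B n ≡ B (n / p) * B (n % p) [ZMOD p] := by
  have hp : 0 < p := (Fact.out : p.Prime).pos
  rw [← ZMod.intCast_eq_intCast_iff]
  set n₁ := n / p with hn₁
  set n₀ := n % p with hn₀
  have hn : n = p * n₁ + n₀ := (Nat.div_add_mod n p).symm
  have hn₀p : n₀ < p := Nat.mod_lt _ hp
  have step1 : ((B n : ℤ) : ZMod p) = ∑ x ∈ Finset.range (n₁ + 1) ×ˢ Finset.range p,
      (((n.choose (p * x.1 + x.2) : ℕ) : ZMod p) ^ 2 *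
        (((n + (p * x.1 + x.2)).choose (p * x.1 + x.2) : ℕ) : ZMod p)) := by
    rw [B]
    push_cast
    rw [Finset.sum_subset (Finset.range_subset_range.mpr (show n + 1 ≤ (n₁ + 1) * p by
      nlinarith [Nat.mod_lt n hp]))]
    · refine Finset.sum_nbij' (fun k => (k / p, k % p)) (fun x => p * x.1 + x.2) ?_ ?_ ?_ ?_ ?_
      · intro k hk
        simp only [Finset.mem_range, Finset.mem_product] at *
        exact ⟨Nat.div_lt_of_lt_mul (by rw [mul_comm]; exact hk), Nat.mod_lt _ hp⟩
      · intro x hx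
        simp only [Finset.mem_range, Finset.mem_product] at *
        have h1 : p * x.1 ≤ p * n₁ := Nat.mul_le_mul_left p (by omega)
        calc p * x.1 + x.2 < p * x.1 + p := by omega
          _ ≤ p * n₁ + p := by omega
          _ = (n₁ + 1) * p := by ring
      · intro k hk
        show p * (k / p) + k % p = k
        exact Nat.div_add_mod k p
      · intro x hx
        simp only [Finset.mem_range, Finset.mem_product] at hx
        ext
        · show (p * x.1 + x.2) / p = x.1
          rw [Nat.mul_add_div hp, Nat.div_eq_of_lt hx.2, add_zero]
        · show (p * x.1 + x.2) % p = x.2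
          rw [Nat.mul_add_mod, Nat.mod_eq_of_lt hx.2]
      · intro k hk
        show _ = ((n.choose (p * (k / p) + k % p) : ℕ) : ZMod p) ^ 2 *
          (((n + (p * (k / p) + k % p)).choose (p * (k / p) + k % p) : ℕ) : ZMod p)
        rw [Nat.div_add_mod k p]
    · intro k hk hk2
      simp only [Finset.mem_range, not_lt] at hk2
      rw [Nat.choose_eq_zero_of_lt (by omega)]
      push_cast; ring
  rw [step1]
  have step2 : ∀ x ∈ Finset.range (n₁ + 1) ×ˢ Finset.range p,
      (((n.choose (p * x.1 + x.2) : ℕ) : ZMod p) ^ 2 *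
        (((n + (p * x.1 + x.2)).choose (p * x.1 + x.2) : ℕ) : ZMod p)) =
      (((n₁.choose x.1 : ℕ) : ZMod p) ^ 2 * (((n₁ + x.1).choose x.1 : ℕ) : ZMod p)) *
      (((n₀.choose x.2 : ℕ) : ZMod p) ^ 2 * (((n₀ + x.2).choose x.2 : ℕ) : ZMod p)) := by
    rintro ⟨i, j⟩ hx
    simp only [Finset.mem_range, Finset.mem_product] at hx
    have c1 : ((n.choose (p * i + j) : ℕ) : ZMod p) = ((n₀.choose j : ℕ) : ZMod p) * ((n₁.choose i : ℕ) : ZMod p) := by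
      have := chooseZ p n (p * i + j)
      rw [show (p * i + j) % p = j by rw [show p * i + j = j + p * i by ring, Nat.add_mul_mod_self_left, Nat.mod_eq_of_lt hx.2],
        show (p * i + j) / p = i by rw [show p * i + j = j + p * i by ring, Nat.add_mul_div_left _ _ hp, Nat.div_eq_of_lt hx.2, zero_add]] at this
      push_cast at this ⊢
      exact this
    have c2 : (((n + (p * i + j)).choose (p * i + j) : ℕ) : ZMod p) =
        (((n₁ + i).choose i : ℕ) : ZMod p) * (((n₀ + j).choose j : ℕ) : ZMod p) := by
      have := keyZ p n₀ n₁ i j hx.2 hn₀p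
      rw [← hn] at this
      push_cast at this ⊢
      exact this
    rw [c1, c2]
    ring
  have hBn₀ : ((B n₀ : ℤ) : ZMod p) =
      ∑ j ∈ Finset.range p, (((n₀.choose j : ℕ) : ZMod p) ^ 2 * (((n₀ + j).choose j : ℕ) : ZMod p)) := by
    rw [B]; push_cast
    exact Finset.sum_subset (Finset.range_subset_range.mpr (by omega))
      (fun j _ hj => by
        simp [Nat.choose_eq_zero_of_lt (show n₀ < j by simpa using hj)])
  have hBn₁ : ((B n₁ : ℤ) : ZMod p) =
      ∑ i ∈ Finset.range (n₁ + 1), (((n₁.choose i : ℕ) : ZMod p) ^ 2 * (((n₁ + i).choose i : ℕ) : ZMod p)) := by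
    rw [B]; push_cast; rfl
  rw [Finset.sum_congr rfl step2, Finset.sum_product, Int.cast_mul, hBn₀, hBn₁,
    Finset.sum_mul_sum]

instance : Fact (Nat.Prime 5) := ⟨by norm_num⟩

theorem pow3_mod5 (a : ℕ) : (3 : ℤ) ^ a ≡ 3 ^ (a % 4) [ZMOD 5] := by
  conv_lhs => rw [← Nat.div_add_mod a 4]
  rw [pow_add, pow_mul]
  calc ((3:ℤ)^4) ^ (a/4) * 3 ^ (a%4) ≡ 1 ^ (a/4) * 3 ^ (a%4) [ZMOD 5] :=
        (Int.ModEq.pow _ (by decide)).mul (Int.ModEq.refl _)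
    _ = 3 ^ (a%4) := by ring

theorem B_mod2 (n : ℕ) : B n ≡ 1 [ZMOD 2] := by
  induction n using Nat.strong_induction_on with
  | _ n ih =>
    rcases lt_or_ge n 2 with h | h
    · interval_cases n <;> norm_num [B, Finset.sum_range_succ] <;> decide
    · have h1 := B_lucas 2 n
      have hq : B (n / 2) ≡ 1 [ZMOD 2] := ih _ (Nat.div_lt_self (by omega) one_lt_two)
      have hr : B (n % 2) ≡ 1 [ZMOD 2] := ih _ (by omega)
      calc B n ≡ B (n / 2) * B (n % 2) [ZMOD 2] := h1
        _ ≡ 1 * 1 [ZMOD 2] := hq.mul hr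
        _ = 1 := one_mul 1

theorem B_mod5 (n : ℕ) : B n ≡ 3 ^ n [ZMOD 5] := by
  induction n using Nat.strong_induction_on with
  | _ n ih =>
    rcases lt_or_ge n 5 with h | h
    · interval_cases n <;> norm_num [B, Finset.sum_range_succ] <;> decide
    · have h1 := B_lucas 5 n
      have hq : B (n / 5) ≡ 3 ^ (n / 5) [ZMOD 5] := ih _ (Nat.div_lt_self (by omega) (by omega))
      have hr : B (n % 5) ≡ 3 ^ (n % 5) [ZMOD 5] := ih _ (by omega)
      have hmod : (n / 5 + n % 5) % 4 = n % 4 := by omega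
      calc B n ≡ B (n / 5) * B (n % 5) [ZMOD 5] := h1
        _ ≡ 3 ^ (n / 5) * 3 ^ (n % 5) [ZMOD 5] := hq.mul hr
        _ = 3 ^ (n / 5 + n % 5) := (pow_add 3 _ _).symm
        _ ≡ 3 ^ ((n / 5 + n % 5) % 4) [ZMOD 5] := pow3_mod5 _
        _ = 3 ^ (n % 4) := by rw [hmod]
        _ ≡ 3 ^ n [ZMOD 5] := (pow3_mod5 n).symm

/-- The Apéry numbers of the second kind satisfy `bₙ ≡ 3ⁿ (mod 10)`. -/
theorem aperyB_modEq_three_pow (n : ℕ) :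
    (∑ k ∈ Finset.range (n + 1), (n.choose k : ℤ) ^ 2 * ((n + k).choose k : ℤ))
      ≡ 3 ^ n [ZMOD 10] := by
  show B n ≡ 3 ^ n [ZMOD 10]
  have h2 : (2 : ℤ) ∣ 3 ^ n - B n := (Int.ModEq.dvd (a := B n) (b := 3 ^ n)) <| by
    calc B n ≡ 1 [ZMOD 2] := B_mod2 n
      _ = 1 ^ n := (one_pow n).symm
      _ ≡ 3 ^ n [ZMOD 2] := Int.ModEq.pow n (by decide)
  have h5 : (5 : ℤ) ∣ 3 ^ n - B n := (Int.ModEq.dvd (B_mod5 n))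
  have h10 : (10 : ℤ) ∣ 3 ^ n - B n := by omega
  exact (Int.modEq_iff_dvd).mpr h10
end

section
/- For all integers n ≥ 0, the sequence u_n = Σ_{k=0}^n C(n,k)^2·C(2k,k) satisfies u_n ≡ 3^n (mod 6). -/
private def U3 (n : ℕ) : ZMod 3 :=
  ∑ k ∈ Finset.range (n + 1), (n.choose k : ZMod 3) ^ 2 * ((2 * k).choose k : ZMod 3)

private lemma choose_zmod3 (n k : ℕ) :
    ((n.choose k : ZMod 3)) =
      ((n % 3).choose (k % 3) : ZMod 3) * ((n / 3).choose (k / 3) : ZMod 3) := by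
  haveI : Fact (Nat.Prime 3) := ⟨by norm_num⟩
  have h := Choose.choose_modEq_choose_mod_mul_choose_div (n := n) (k := k) (p := 3)
  have h2 := (ZMod.intCast_eq_intCast_iff _ _ _).mpr h
  push_cast at h2
  exact h2

private lemma sum_range_three_mul {M : Type*} [AddCommMonoid M] (f : ℕ → M) (q : ℕ) :
    ∑ k ∈ Finset.range (3 * q), f k
      = ∑ a ∈ Finset.range q, (f (3 * a) + f (3 * a + 1) + f (3 * a + 2)) := by
  induction q with
  | zero => simp
  | succ q ih =>
      have h3 : 3 * (q + 1) = 3 * q + 1 + 1 + 1 := by ring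
      rw [h3, Finset.sum_range_succ, Finset.sum_range_succ, Finset.sum_range_succ, ih,
        Finset.sum_range_succ]
      abel

private lemma U3_eq (q r : ℕ) (hr : r < 3) :
    U3 (3 * q + r) = ((r.choose 0 : ZMod 3) ^ 2 + 2 * (r.choose 1 : ZMod 3) ^ 2) * U3 q := by
  have hsubset : Finset.range (3 * q + r + 1) ⊆ Finset.range (3 * (q + 1)) := by
    apply Finset.range_subset_range.mpr; omega
  rw [U3]
  rw [Finset.sum_subset hsubset (fun k _ hk => by
    have hlt : 3 * q + r < k := by
      simp only [Finset.mem_range] at hk ⊢; omega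
    rw [Nat.choose_eq_zero_of_lt hlt]
    push_cast
    ring)]
  rw [sum_range_three_mul, U3, Finset.mul_sum]
  apply Finset.sum_congr rfl
  intro a _
  have hch : ∀ b, b < 3 → (((3 * q + r).choose (3 * a + b) : ZMod 3))
      = (r.choose b : ZMod 3) * (q.choose a : ZMod 3) := by
    intro b hb
    rw [choose_zmod3]
    have e1 : (3 * q + r) % 3 = r := by omega
    have e2 : (3 * q + r) / 3 = q := by omega
    have e3 : (3 * a + b) % 3 = b := by omega
    have e4 : (3 * a + b) / 3 = a := by omega
    rw [e1, e2, e3, e4]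
  have h0 : (((2 * (3 * a)).choose (3 * a) : ZMod 3)) = ((2 * a).choose a : ZMod 3) := by
    rw [choose_zmod3]
    have e1 : 2 * (3 * a) % 3 = 0 := by omega
    have e2 : 2 * (3 * a) / 3 = 2 * a := by omega
    have e3 : 3 * a % 3 = 0 := by omega
    have e4 : 3 * a / 3 = a := by omega
    rw [e1, e2, e3, e4]
    simp
  have h1 : (((2 * (3 * a + 1)).choose (3 * a + 1) : ZMod 3))
      = 2 * ((2 * a).choose a : ZMod 3) := by
    rw [choose_zmod3]
    have e1 : 2 * (3 * a + 1) % 3 = 2 := by omega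
    have e2 : 2 * (3 * a + 1) / 3 = 2 * a := by omega
    have e3 : (3 * a + 1) % 3 = 1 := by omega
    have e4 : (3 * a + 1) / 3 = a := by omega
    rw [e1, e2, e3, e4]
    norm_num [Nat.choose]
  have h2 : (((2 * (3 * a + 2)).choose (3 * a + 2) : ZMod 3)) = 0 := by
    rw [choose_zmod3]
    have e1 : 2 * (3 * a + 2) % 3 = 1 := by omega
    have e3 : (3 * a + 2) % 3 = 2 := by omega
    rw [e1, e3]
    simp [Nat.choose]
  have hc0 : (((3 * q + r).choose (3 * a) : ZMod 3))
      = (r.choose 0 : ZMod 3) * (q.choose a : ZMod 3) := by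
    have := hch 0 (by norm_num); simpa using this
  rw [hc0, hch 1 (by norm_num), hch 2 (by norm_num), h0, h1, h2]
  ring

private lemma U3_eq_zero : ∀ n, 1 ≤ n → U3 n = 0 := by
  intro n
  induction n using Nat.strong_induction_on with
  | _ n ih =>
    intro hn
    obtain ⟨q, r, hr, rfl⟩ : ∃ q r, r < 3 ∧ n = 3 * q + r :=
      ⟨n / 3, n % 3, Nat.mod_lt _ (by norm_num), by omega⟩
    rw [U3_eq q r hr]
    interval_cases r
    · have hq : 1 ≤ q := by omega
      rw [ih q (by omega) hq, mul_zero]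
    · have hfac : ((Nat.choose 1 0 : ZMod 3)) ^ 2 + 2 * ((Nat.choose 1 1 : ZMod 3)) ^ 2 = 0 := by
        decide
      rw [hfac, zero_mul]
    · have hfac : ((Nat.choose 2 0 : ZMod 3)) ^ 2 + 2 * ((Nat.choose 2 1 : ZMod 3)) ^ 2 = 0 := by
        decide
      rw [hfac, zero_mul]

/-- The Apéry-like sequence C of the second kind satisfies `uₙ ≡ 3ⁿ (mod 6)`. -/
theorem aperyLikeC_modEq_three_pow (n : ℕ) :
    (∑ k ∈ Finset.range (n + 1), (n.choose k : ℤ) ^ 2 * ((2 * k).choose k : ℤ))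
      ≡ 3 ^ n [ZMOD 6] := by
  have h6 : ((6 : ℕ) : ℤ) = 2 * 3 := by norm_num
  show Int.ModEq _ _ _
  rw [show ((6 : ℤ)) = 2 * 3 from by norm_num]
  rw [← Int.modEq_and_modEq_iff_modEq_mul (by norm_num)]
  constructor
  · -- mod 2
    have : ((∑ k ∈ Finset.range (n + 1), (n.choose k : ℤ) ^ 2 * ((2 * k).choose k : ℤ) : ℤ)
        : ZMod 2) = ((3 ^ n : ℤ) : ZMod 2) := by
      push_cast
      rw [Finset.sum_range_succ']
      have hz : ∀ k ∈ Finset.range n,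
          (n.choose (k + 1) : ZMod 2) ^ 2 * ((2 * (k + 1)).choose (k + 1) : ZMod 2) = 0 := by
        intro k _
        have hdvd : 2 ∣ (2 * (k + 1)).choose (k + 1) := by
          have := Nat.two_dvd_centralBinom_of_one_le (n := k + 1) (by omega)
          rwa [Nat.centralBinom_eq_two_mul_choose] at this
        rw [(ZMod.natCast_eq_zero_iff _ 2).mpr hdvd, mul_zero]
      rw [Finset.sum_eq_zero hz]
      have h31 : (3 : ZMod 2) = 1 := by decide
      simp [h31]
    exact (ZMod.intCast_eq_intCast_iff _ _ 2).mp this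
  · -- mod 3
    have : ((∑ k ∈ Finset.range (n + 1), (n.choose k : ℤ) ^ 2 * ((2 * k).choose k : ℤ) : ℤ)
        : ZMod 3) = ((3 ^ n : ℤ) : ZMod 3) := by
      push_cast
      rcases Nat.eq_zero_or_pos n with hn | hn
      · subst hn; decide
      · have hU := U3_eq_zero n hn
        rw [U3] at hU
        rw [hU]
        have : (3 : ZMod 3) = 0 := by decide
        rw [this, zero_pow (by omega)]
    exact (ZMod.intCast_eq_intCast_iff _ _ 3).mp this
end

section
/- For all integers n ≥ 0, the sequence u_n = Σ_{k=0}^n C(n,k)^2·C(2k,n)^2 satisfies u_n ≡ 4^n (mod 24). -/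
/-!
Write `t n k = C(n,k) C(2k,n) = C(2k,k) C(k,n-k)`, so that `uₙ = ∑ₖ (t n k)²`.

Modulo 3, Lucas' theorem makes `t` multiplicative in the base-3 digits of `n` and `k`, and for
each digit of `n` exactly one digit of `k` gives a factor prime to 3, with square 1. So exactly
one summand of `uₙ` is `1` mod 3 and the others vanish: `uₙ ≡ 1 ≡ 4ⁿ`.

Modulo 8 (for `n ≥ 2`, so `4ⁿ ≡ 0`): every `t n k` is even, hence `(t n k)² ≡ 2 t n k`, and
`∑ₖ t n k = 2 ∑ₖ (C(2k,k)/2) C(k,n-k)`. Now `C(2k,k)/2` is odd iff `k` is a power of two, and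
then `C(k,n-k)` is odd iff `n ∈ {k, 2k}`; so the odd summands are `k = n` and `k = n/2` when `n`
is a power of two and there are none otherwise. Hence `4 ∣ ∑ₖ t n k` and `8 ∣ uₙ`.
-/

open Finset Nat

theorem natCast_choose_eq_choose_mod_mul_choose_div (p n k : ℕ) [Fact p.Prime] :
    (n.choose k : ZMod p) = (n % p).choose (k % p) * (n / p).choose (k / p) := by
  exact_mod_cast (ZMod.natCast_eq_natCast_iff _ _ _).mpr
    Choose.choose_modEq_choose_mod_mul_choose_div_nat

theorem odd_choose_iff_odd_choose_mod_two_and_odd_choose_div_two (n k : ℕ) :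
    Odd (n.choose k) ↔ Odd ((n % 2).choose (k % 2)) ∧ Odd ((n / 2).choose (k / 2)) := by
  have : Fact (Nat.Prime 2) := ⟨Nat.prime_two⟩
  rw [← Nat.odd_mul, Nat.odd_iff, Nat.odd_iff,
    Choose.choose_modEq_choose_mod_mul_choose_div_nat (p := 2)]

theorem isPowerOfTwo_two_mul_iff (m : ℕ) : (2 * m).isPowerOfTwo ↔ m.isPowerOfTwo := by
  constructor
  · rintro ⟨_ | j, hj⟩
    · omega
    · exact ⟨j, by rw [pow_succ] at hj; omega⟩
  · rintro ⟨j, rfl⟩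
    exact ⟨j + 1, by rw [pow_succ, mul_comm]⟩

theorem isPowerOfTwo_two_mul_add_one_iff (m : ℕ) : (2 * m + 1).isPowerOfTwo ↔ m = 0 := by
  constructor
  · rintro ⟨_ | j, hj⟩
    · simpa using hj
    · rw [pow_succ] at hj; omega
  · rintro rfl
    exact Nat.isPowerOfTwo_one

theorem odd_choose_two_mul_add_one_iff (k : ℕ) :
    Odd ((2 * k + 1).choose k) ↔ (k + 1).isPowerOfTwo := by
  induction k using Nat.strong_induction_on with
  | _ k ih =>
    rw [odd_choose_iff_odd_choose_mod_two_and_odd_choose_div_two,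
      show (2 * k + 1) % 2 = 1 by omega, show (2 * k + 1) / 2 = k by omega]
    obtain ⟨b, rfl | rfl⟩ := Nat.even_or_odd' k
    · rw [isPowerOfTwo_two_mul_add_one_iff,
        show 2 * b % 2 = 0 by omega, show 2 * b / 2 = b by omega, ← centralBinom_eq_two_mul_choose]
      rcases b.eq_zero_or_pos with rfl | hb
      · simp
      · simp [hb.ne', Nat.not_odd_iff_even, even_iff_two_dvd, two_dvd_centralBinom_of_one_le hb]
    · rw [show 2 * b + 1 + 1 = 2 * (b + 1) by ring, isPowerOfTwo_two_mul_iff, ← ih b (by omega),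
        show (2 * b + 1) % 2 = 1 by omega, show (2 * b + 1) / 2 = b by omega]
      simp

theorem centralBinom_succ_div_two (k : ℕ) : centralBinom (k + 1) / 2 = (2 * k + 1).choose k := by
  rw [centralBinom_eq_two_mul_choose, show 2 * (k + 1) = 2 * k + 1 + 1 by ring,
    Nat.choose_succ_succ, Nat.choose_symm_half, ← two_mul, Nat.mul_div_cancel_left _ two_pos]

theorem odd_centralBinom_div_two_iff (k : ℕ) : Odd (centralBinom k / 2) ↔ k.isPowerOfTwo := by
  cases k with
  | zero => simp [Nat.not_isPowerOfTwo_zero]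
  | succ k => rw [centralBinom_succ_div_two, odd_choose_two_mul_add_one_iff]

theorem odd_two_pow_choose_iff (j m : ℕ) : Odd ((2 ^ j).choose m) ↔ m = 0 ∨ m = 2 ^ j := by
  rw [← Nat.not_even_iff_odd, even_iff_two_dvd, Nat.prime_two.dvd_choose_pow_iff]
  tauto

def epsilonTerm (n k : ℕ) : ℕ := n.choose k * (2 * k).choose n

def aperyLikeEpsilon (n : ℕ) : ℕ := ∑ k ∈ range (n + 1), epsilonTerm n k ^ 2

theorem epsilonTerm_eq_centralBinom_mul_choose {n k : ℕ} (hk : k ≤ n) :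
    epsilonTerm n k = centralBinom k * k.choose (n - k) := by
  rw [epsilonTerm, mul_comm, Nat.choose_mul hk, two_mul, Nat.add_sub_cancel,
      ← two_mul, centralBinom_eq_two_mul_choose]

-- For `k % 3 = 2` both sides vanish, which hides the carry in `2 * k`.
theorem natCast_epsilonTerm_zmod_three (n k : ℕ) :
    (epsilonTerm n k : ZMod 3) =
      epsilonTerm (n % 3) (k % 3) * epsilonTerm (n / 3) (k / 3) := by
  have : Fact (Nat.Prime 3) := ⟨Nat.prime_three⟩
  have hmod : 2 * k % 3 = 2 * (k % 3) % 3 := by omega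
  have hdiv : 2 * k / 3 = 2 * (k / 3) + 2 * (k % 3) / 3 := by omega
  simp only [epsilonTerm, Nat.cast_mul]
  rw [natCast_choose_eq_choose_mod_mul_choose_div 3 n,
    natCast_choose_eq_choose_mod_mul_choose_div 3 (2 * k), hmod, hdiv]
  have hr := n.mod_lt three_pos
  have hs := k.mod_lt three_pos
  generalize n % 3 = r at *
  generalize k % 3 = s at *
  interval_cases r <;> interval_cases s <;>
    simp [Nat.choose, show (6 : ZMod 3) = 0 from rfl] <;> ring

/-- Replaces every ternary digit `d` of `n` by `min d 1`. -/
def ternaryClamp : ℕ → ℕ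
  | 0 => 0
  | n + 1 => 3 * ternaryClamp ((n + 1) / 3) + min ((n + 1) % 3) 1

theorem ternaryClamp_eq (n : ℕ) :
    ternaryClamp n = 3 * ternaryClamp (n / 3) + min (n % 3) 1 := by
  cases n <;> simp [ternaryClamp]

theorem ternaryClamp_le (n : ℕ) : ternaryClamp n ≤ n := by
  induction n using Nat.strong_induction_on with
  | _ n ih =>
    rcases n.eq_zero_or_pos with rfl | hn
    · simp [ternaryClamp]
    · have := ih (n / 3) (by omega)
      rw [ternaryClamp_eq]
      omega

theorem sq_natCast_epsilonTerm_zmod_three (n k : ℕ) :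
    (epsilonTerm n k : ZMod 3) ^ 2 = if k = ternaryClamp n then 1 else 0 := by
  induction n using Nat.strong_induction_on generalizing k with
  | _ n ih =>
    rcases n.eq_zero_or_pos with rfl | hn
    · cases k <;> simp [epsilonTerm, ternaryClamp]
    have hdigit : ∀ r < 3, ∀ s < 3,
        (epsilonTerm r s : ZMod 3) ^ 2 = if s = min r 1 then 1 else 0 := by decide
    have hk : k = ternaryClamp n ↔ k % 3 = min (n % 3) 1 ∧ k / 3 = ternaryClamp (n / 3) := by
      rw [ternaryClamp_eq]; omega
    rw [natCast_epsilonTerm_zmod_three, mul_pow, ih (n / 3) (by omega),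
      hdigit _ (n.mod_lt three_pos) _ (k.mod_lt three_pos), if_congr hk rfl rfl, ite_and]
    split_ifs <;> simp

theorem aperyLikeEpsilon_zmod_three (n : ℕ) : (aperyLikeEpsilon n : ZMod 3) = 4 ^ n := by
  rw [show (4 : ZMod 3) = 1 from rfl, one_pow, aperyLikeEpsilon]
  push_cast
  simp_rw [sq_natCast_epsilonTerm_zmod_three, sum_ite_eq', mem_range]
  simp [Nat.lt_succ_of_le (ternaryClamp_le n)]

theorem odd_centralBinom_div_two_mul_choose_iff {n k : ℕ} (hk : k ≤ n) :
    Odd (centralBinom k / 2 * k.choose (n - k)) ↔ k.isPowerOfTwo ∧ (n = k ∨ n = 2 * k) := by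
  rw [Nat.odd_mul, odd_centralBinom_div_two_iff]
  constructor
  · rintro ⟨⟨j, rfl⟩, hodd⟩
    rw [odd_two_pow_choose_iff] at hodd
    exact ⟨⟨j, rfl⟩, by omega⟩
  · rintro ⟨⟨j, rfl⟩, hn⟩
    rw [odd_two_pow_choose_iff]
    exact ⟨⟨j, rfl⟩, by omega⟩

theorem even_sum_centralBinom_div_two_mul_choose {n : ℕ} (hn : 2 ≤ n) :
    Even (∑ k ∈ range (n + 1), centralBinom k / 2 * k.choose (n - k)) := by
  rw [even_sum_iff_even_card_odd, filter_congr fun k hk =>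
    odd_centralBinom_div_two_mul_choose_iff (Nat.lt_succ_iff.mp (mem_range.mp hk))]
  by_cases hpow : n.isPowerOfTwo
  · obtain ⟨_ | j, rfl⟩ := hpow
    · omega
    have hpair : {k ∈ range (2 ^ (j + 1) + 1) |
        k.isPowerOfTwo ∧ (2 ^ (j + 1) = k ∨ 2 ^ (j + 1) = 2 * k)} = {2 ^ (j + 1), 2 ^ j} := by
      ext k
      simp only [mem_filter, mem_range, mem_insert, mem_singleton, pow_succ]
      constructor
      · rintro ⟨-, -, h | h⟩ <;> omega
      · rintro (rfl | rfl)
        · exact ⟨by omega, ⟨j + 1, pow_succ 2 j⟩, Or.inl rfl⟩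
        · exact ⟨by omega, ⟨j, rfl⟩, Or.inr (mul_comm _ _)⟩
    rw [hpair, card_pair (by rw [pow_succ]; omega)]
    exact even_two
  · rw [filter_eq_empty_iff.mpr ?_, card_empty]
    · exact Even.zero
    rintro k - ⟨hk, rfl | rfl⟩
    · exact hpow hk
    · exact hpow ((isPowerOfTwo_two_mul_iff k).mpr hk)

theorem four_dvd_sum_epsilonTerm {n : ℕ} (hn : 2 ≤ n) :
    4 ∣ ∑ k ∈ range (n + 1), epsilonTerm n k := by
  have hterm : ∀ k ∈ range (n + 1),
      epsilonTerm n k = 2 * (centralBinom k / 2 * k.choose (n - k)) := by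
    intro k hk
    rw [epsilonTerm_eq_centralBinom_mul_choose (Nat.lt_succ_iff.mp (mem_range.mp hk)), ← mul_assoc]
    rcases k.eq_zero_or_pos with rfl | hk
    · simp [Nat.choose_eq_zero_of_lt (show 0 < n by omega)]
    · rw [Nat.mul_div_cancel' (two_dvd_centralBinom_of_one_le hk)]
  obtain ⟨c, hc⟩ := even_sum_centralBinom_div_two_mul_choose hn
  rw [sum_congr rfl hterm, ← mul_sum, hc]
  exact ⟨c, by ring⟩

theorem two_dvd_epsilonTerm {n k : ℕ} (hn : 0 < n) (hk : k ≤ n) : 2 ∣ epsilonTerm n k := by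
  rw [epsilonTerm_eq_centralBinom_mul_choose hk]
  rcases k.eq_zero_or_pos with rfl | hk
  · simp [Nat.choose_eq_zero_of_lt hn]
  · exact Dvd.dvd.mul_right (two_dvd_centralBinom_of_one_le hk) _

theorem aperyLikeEpsilon_zmod_eight (n : ℕ) : (aperyLikeEpsilon n : ZMod 8) = 4 ^ n := by
  rcases lt_or_ge n 2 with hn | hn
  · interval_cases n <;> decide
  have hsq : ∀ k ∈ range (n + 1), (epsilonTerm n k : ZMod 8) ^ 2 = 2 * epsilonTerm n k := by
    intro k hk
    obtain ⟨y, hy⟩ := two_dvd_epsilonTerm (by omega) (Nat.lt_succ_iff.mp (mem_range.mp hk))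
    rw [hy, Nat.cast_mul]
    generalize (y : ZMod 8) = z
    revert z
    decide
  obtain ⟨c, hc⟩ := four_dvd_sum_epsilonTerm hn
  rw [aperyLikeEpsilon, Nat.cast_sum, sum_congr rfl fun k hk => by rw [Nat.cast_pow, hsq k hk],
    ← mul_sum, ← Nat.cast_sum, hc, ← Nat.sub_add_cancel hn, pow_add]
  push_cast
  rw [show (4 : ZMod 8) ^ 2 = 0 by decide, ← mul_assoc, show (2 : ZMod 8) * 4 = 0 by decide]
  ring

/-- The Apéry-like sequence (ε) of the first kind satisfies `uₙ ≡ 4ⁿ (mod 24)`. -/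
theorem aperyLikeEpsilon_modEq_four_pow (n : ℕ) :
    (∑ k ∈ Finset.range (n + 1), (n.choose k : ℤ) ^ 2 * ((2 * k).choose n : ℤ) ^ 2)
      ≡ 4 ^ n [ZMOD 24] := by
  have hcast : ∑ k ∈ Finset.range (n + 1), (n.choose k : ℤ) ^ 2 * ((2 * k).choose n : ℤ) ^ 2
      = (aperyLikeEpsilon n : ℤ) := by
    simp [aperyLikeEpsilon, epsilonTerm, mul_pow]
  have h3 : aperyLikeEpsilon n ≡ 4 ^ n [MOD 3] :=
    (ZMod.natCast_eq_natCast_iff _ _ _).mp (by push_cast; exact aperyLikeEpsilon_zmod_three n)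
  have h8 : aperyLikeEpsilon n ≡ 4 ^ n [MOD 8] :=
    (ZMod.natCast_eq_natCast_iff _ _ _).mp (by push_cast; exact aperyLikeEpsilon_zmod_eight n)
  have h24 := (Nat.modEq_and_modEq_iff_modEq_mul (by norm_num)).mp ⟨h3, h8⟩
  rw [hcast]
  exact_mod_cast Int.natCast_modEq_iff.mpr h24
end

section
/- For all integers n ≥ 0, the Almkvist–Zudilin number Z_n = Σ_{k=0}^{⌊n/3⌋} (-1)^k·3^{n-3k}·C(n,3k)·C(n+k,k)·C(3k,2k)·C(2k,k) satisfies Z_n ≡ 3^n (mod 24). -/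
/-- The Almkvist–Zudilin numbers
`Zₙ = ∑_{k=0}^{⌊n/3⌋} (-1)ᵏ 3^{n-3k} C(n,3k) C(n+k,k) C(3k,2k) C(2k,k)`. -/
def almkvistZudilin (n : ℕ) : ℤ :=
  ∑ k ∈ Finset.range (n / 3 + 1),
    (-1) ^ k * 3 ^ (n - 3 * k) * (n.choose (3 * k) : ℤ) * ((n + k).choose k : ℤ) *
      ((3 * k).choose (2 * k) : ℤ) * ((2 * k).choose k : ℤ)

lemma az_two_dvd_central {m : ℕ} (hm : m ≠ 0) : 2 ∣ (2 * m).choose m := by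
  obtain ⟨j, rfl⟩ := Nat.exists_eq_succ_of_ne_zero hm
  have h := Nat.add_one_mul_choose_eq (2 * j + 1) j
  have h' : (2 * j + 2) * (2 * j + 1).choose j = (2 * (j + 1)).choose (j + 1) * (j + 1) := by
    simpa [Nat.succ_eq_add_one, show 2 * j + 1 + 1 = 2 * (j + 1) by ring] using h
  refine ⟨(2 * j + 1).choose j, ?_⟩
  have key : (j + 1) * ((2 * (j + 1)).choose (j + 1)) = (j + 1) * (2 * (2 * j + 1).choose j) :=
    calc (j + 1) * ((2 * (j + 1)).choose (j + 1))
        = (2 * (j + 1)).choose (j + 1) * (j + 1) := mul_comm _ _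
      _ = (2 * j + 2) * (2 * j + 1).choose j := h'.symm
      _ = (j + 1) * (2 * (2 * j + 1).choose j) := by ring
  exact Nat.eq_of_mul_eq_mul_left (Nat.succ_pos j) key

lemma az_three_dvd_choose {k : ℕ} (hk : k ≠ 0) : 3 ∣ (3 * k).choose (2 * k) := by
  have hsymm : (3 * k).choose (2 * k) = (3 * k).choose k := by
    have := Nat.choose_symm (show k ≤ 3 * k by omega)
    rwa [show 3 * k - k = 2 * k by omega] at this
  rw [hsymm]
  obtain ⟨j, rfl⟩ := Nat.exists_eq_succ_of_ne_zero hk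
  have h := Nat.add_one_mul_choose_eq (3 * j + 2) j
  have h' : (3 * j + 3) * (3 * j + 2).choose j = (3 * (j + 1)).choose (j + 1) * (j + 1) := by
    simpa [Nat.succ_eq_add_one, show 3 * j + 2 + 1 = 3 * (j + 1) by ring] using h
  refine ⟨(3 * j + 2).choose j, ?_⟩
  have key : (j + 1) * ((3 * (j + 1)).choose (j + 1)) = (j + 1) * (3 * (3 * j + 2).choose j) :=
    calc (j + 1) * ((3 * (j + 1)).choose (j + 1))
        = (3 * (j + 1)).choose (j + 1) * (j + 1) := mul_comm _ _
      _ = (3 * j + 3) * (3 * j + 2).choose j := h'.symm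
      _ = (j + 1) * (3 * (3 * j + 2).choose j) := by ring
  exact Nat.eq_of_mul_eq_mul_left (Nat.succ_pos j) key

lemma az_key_identity {n k : ℕ} (h : 3 * k ≤ n) :
    n.choose (3 * k) * (n + k).choose k * (3 * k).choose (2 * k) * (2 * k).choose k
      = (n + k).choose (4 * k) * (4 * k).choose (2 * k) * (2 * k).choose k
          * (2 * k).choose k := by
  have h1 : k ≤ 2 * k := by omega
  have h2 : 2 * k ≤ 3 * k := by omega
  have h3 : k ≤ n + k := by omega
  have h4 : 4 * k ≤ n + k := by omega
  have h5 : 2 * k ≤ 4 * k := by omega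
  have s1 : 2 * k - k = k := by omega
  have s2 : 3 * k - 2 * k = k := by omega
  have s3 : n + k - k = n := by omega
  have s4 : n + k - 4 * k = n - 3 * k := by omega
  have s5 : 4 * k - 2 * k = 2 * k := by omega
  have key : ((n.choose (3 * k) * (n + k).choose k * (3 * k).choose (2 * k)
        * (2 * k).choose k : ℕ) : ℚ)
      = ((  (n + k).choose (4 * k) * (4 * k).choose (2 * k) * (2 * k).choose k
          * (2 * k).choose k : ℕ) : ℚ) := by
    push_cast
    rw [Nat.cast_choose ℚ h1, Nat.cast_choose ℚ h2, Nat.cast_choose ℚ h3,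
      Nat.cast_choose ℚ h4, Nat.cast_choose ℚ h5, Nat.cast_choose ℚ h,
      s1, s2, s3, s4, s5]
    have f1 : ((Nat.factorial k : ℕ) : ℚ) ≠ 0 := Nat.cast_ne_zero.2 (Nat.factorial_ne_zero _)
    have f2 : ((Nat.factorial (2*k) : ℕ) : ℚ) ≠ 0 := Nat.cast_ne_zero.2 (Nat.factorial_ne_zero _)
    have f3 : ((Nat.factorial (3*k) : ℕ) : ℚ) ≠ 0 := Nat.cast_ne_zero.2 (Nat.factorial_ne_zero _)
    have f4 : ((Nat.factorial (4*k) : ℕ) : ℚ) ≠ 0 := Nat.cast_ne_zero.2 (Nat.factorial_ne_zero _)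
    have f5 : ((Nat.factorial n : ℕ) : ℚ) ≠ 0 := Nat.cast_ne_zero.2 (Nat.factorial_ne_zero _)
    have f6 : ((Nat.factorial (n-3*k) : ℕ) : ℚ) ≠ 0 := Nat.cast_ne_zero.2 (Nat.factorial_ne_zero _)
    field_simp
  exact_mod_cast key

lemma az_dvd_term {n k : ℕ} (hk : k ≠ 0) (h : 3 * k ≤ n) :
    24 ∣ n.choose (3 * k) * (n + k).choose k * (3 * k).choose (2 * k) * (2 * k).choose k := by
  have h3 : 3 ∣ n.choose (3 * k) * (n + k).choose k * (3 * k).choose (2 * k)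
      * (2 * k).choose k :=
    ((az_three_dvd_choose hk).mul_left _).mul_right _
  have h8 : 8 ∣ n.choose (3 * k) * (n + k).choose k * (3 * k).choose (2 * k)
      * (2 * k).choose k := by
    rw [az_key_identity h]
    obtain ⟨x, hx⟩ : 2 ∣ (4 * k).choose (2 * k) := by
      have := az_two_dvd_central (show 2 * k ≠ 0 by omega)
      rwa [show 2 * (2 * k) = 4 * k by ring] at this
    obtain ⟨y, hy⟩ := az_two_dvd_central hk
    exact ⟨(n + k).choose (4 * k) * x * y * y, by rw [hx, hy]; ring⟩
  have := Nat.Coprime.mul_dvd_of_dvd_of_dvd (show Nat.Coprime 8 3 by norm_num) h8 h3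
  simpa using this

/-- The Almkvist–Zudilin numbers satisfy `Zₙ ≡ 3ⁿ (mod 24)`. -/
theorem almkvistZudilin_modEq_three_pow (n : ℕ) :
    almkvistZudilin n ≡ 3 ^ n [ZMOD 24] := by
  have h : (24 : ℤ) ∣ almkvistZudilin n - 3 ^ n := by
    unfold almkvistZudilin
    rw [Finset.sum_range_succ']
    simp only [pow_zero, one_mul, Nat.mul_zero, Nat.sub_zero, Nat.choose_zero_right,
      Nat.add_zero, Nat.choose_self, Nat.cast_one, mul_one, Nat.choose_zero_right]
    rw [add_sub_cancel_right]
    apply Finset.dvd_sum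
    intro i hi
    have hmem := Finset.mem_range.1 hi
    have hik : 3 * (i + 1) ≤ n := by omega
    obtain ⟨c, hc⟩ := az_dvd_term (Nat.succ_ne_zero i) hik
    refine ⟨(-1) ^ (i + 1) * 3 ^ (n - 3 * (i + 1)) * (c : ℤ), ?_⟩
    have hc' : (n.choose (3 * (i + 1)) : ℤ) * ((n + (i + 1)).choose (i + 1) : ℤ)
        * ((3 * (i + 1)).choose (2 * (i + 1)) : ℤ) * ((2 * (i + 1)).choose (i + 1) : ℤ)
        = 24 * (c : ℤ) := by exact_mod_cast hc
    linear_combination ((-1 : ℤ) ^ (i + 1) * 3 ^ (n - 3 * (i + 1))) * hc'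
  exact (Int.modEq_iff_dvd.2 h).symm
end

section
/- For all integers n ≥ 0, the sequence u_n = Σ_{k=0}^n C(n,k)^2·C(n+k,k)·C(2k,n) satisfies u_n ≡ 4^n (mod 8). -/
namespace CooperS7Aux

/-- Binary digit sum. -/
def s (m : ℕ) : ℕ := (Nat.digits 2 m).sum

lemma s_zero : s 0 = 0 := by simp [s]

lemma s_two_mul (m : ℕ) : s (2 * m) = s m := by
  rcases Nat.eq_zero_or_pos m with rfl | hm
  · simp [s]
  · unfold s
    rw [Nat.digits_def' (by norm_num : (1:ℕ) < 2) (by omega)]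
    have h1 : 2 * m % 2 = 0 := by omega
    have h2 : 2 * m / 2 = m := by omega
    rw [h1, h2]
    simp

lemma s_two_mul_add_one (m : ℕ) : s (2 * m + 1) = s m + 1 := by
  unfold s
  rw [Nat.digits_def' (by norm_num : (1:ℕ) < 2) (by omega)]
  have h1 : (2 * m + 1) % 2 = 1 := by omega
  have h2 : (2 * m + 1) / 2 = m := by omega
  rw [h1, h2]
  simp [add_comm]

lemma s_one : s 1 = 1 := by
  have := s_two_mul_add_one 0
  simpa [s_zero] using this

lemma s_pos : ∀ m, m ≠ 0 → 1 ≤ s m := by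
  intro m
  induction m using Nat.strong_induction_on with
  | _ m ih =>
    intro hm
    rcases Nat.even_or_odd m with ⟨t, rfl⟩ | ⟨t, rfl⟩
    · rw [show t + t = 2 * t by ring, s_two_mul]
      exact ih t (by omega) (by omega)
    · rw [s_two_mul_add_one]; omega

lemma s_add_le_aux : ∀ N a b : ℕ, a + b ≤ N → s (a + b) ≤ s a + s b := by
  intro N
  induction N with
  | zero =>
    intro a b h
    have ha : a = 0 := by omega
    have hb : b = 0 := by omega
    subst ha; subst hb; simp [s_zero]
  | succ N ih =>
    intro a b h
    rcases Nat.even_or_odd a with ⟨a', rfl⟩ | ⟨a', rfl⟩ <;>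
      rcases Nat.even_or_odd b with ⟨b', rfl⟩ | ⟨b', rfl⟩
    · rw [show a' + a' + (b' + b') = 2 * (a' + b') by ring, s_two_mul,
        show a' + a' = 2 * a' by ring, show b' + b' = 2 * b' by ring,
        s_two_mul, s_two_mul]
      exact ih a' b' (by omega)
    · rw [show a' + a' + (2 * b' + 1) = 2 * (a' + b') + 1 by ring, s_two_mul_add_one,
        show a' + a' = 2 * a' by ring, s_two_mul, s_two_mul_add_one]
      have := ih a' b' (by omega)
      omega
    · rw [show 2 * a' + 1 + (b' + b') = 2 * (a' + b') + 1 by ring, s_two_mul_add_one,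
        show b' + b' = 2 * b' by ring, s_two_mul, s_two_mul_add_one]
      have := ih a' b' (by omega)
      omega
    · rw [show 2 * a' + 1 + (2 * b' + 1) = 2 * (a' + b' + 1) by ring, s_two_mul,
        s_two_mul_add_one, s_two_mul_add_one]
      have h1 : s (a' + b' + 1) ≤ s (a' + b') + s 1 := ih (a' + b') 1 (by omega)
      have h2 : s (a' + b') ≤ s a' + s b' := ih a' b' (by omega)
      rw [s_one] at h1
      omega

lemma s_add_le (a b : ℕ) : s (a + b) ≤ s a + s b := s_add_le_aux (a + b) a b le_rfl

/-- Kummer's theorem for `p = 2`, in addition form. -/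
lemma kummer (a b : ℕ) : padicValNat 2 ((a + b).choose b) + s (a + b) = s a + s b := by
  haveI : Fact (Nat.Prime 2) := ⟨Nat.prime_two⟩
  have h := @sub_one_mul_padicValNat_choose_eq_sub_sum_digits' 2 b a _
  have h2 := s_add_le a b
  unfold s at *
  omega

lemma s_pow (j : ℕ) : s (2 ^ j) = 1 := by
  induction j with
  | zero => simpa using s_one
  | succ i ih => rw [pow_succ, mul_comm, s_two_mul]; exact ih

lemma s_three_pow (j : ℕ) : s (3 * 2 ^ j) = 2 := by
  induction j with
  | zero =>
    have := s_two_mul_add_one 1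
    simpa [s_one] using this
  | succ i ih =>
    rw [show 3 * 2 ^ (i + 1) = 2 * (3 * 2 ^ i) by ring, s_two_mul]
    exact ih

lemma s_eq_one : ∀ m, s m = 1 → ∃ j, m = 2 ^ j := by
  intro m
  induction m using Nat.strong_induction_on with
  | _ m ih =>
    intro hm
    rcases Nat.even_or_odd m with ⟨t, rfl⟩ | ⟨t, rfl⟩
    · have ht : t ≠ 0 := by
        rintro rfl
        simp [s_zero] at hm
      rw [show t + t = 2 * t by ring, s_two_mul] at hm
      obtain ⟨j, rfl⟩ := ih t (by omega) hm
      exact ⟨j + 1, by ring⟩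
    · rw [s_two_mul_add_one] at hm
      have ht : s t = 0 := by omega
      have ht0 : t = 0 := by
        by_contra h
        have := s_pos t h
        omega
      exact ⟨0, by omega⟩

/-- The generic case: the term is divisible by 8. -/
lemma eight_dvd_term {n k : ℕ} (hn : 1 ≤ n) (hkn : k ≤ n) (hnk : n ≤ 2 * k)
    (h1 : k = n → s n ≠ 1) (h2 : 2 * k = n → s k ≠ 1) :
    8 ∣ n.choose k ^ 2 * ((n + k).choose k) * ((2 * k).choose n) := by
  haveI : Fact (Nat.Prime 2) := ⟨Nat.prime_two⟩
  set a := padicValNat 2 (n.choose k) with ha_def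
  set b := padicValNat 2 ((n + k).choose k) with hb_def
  set c := padicValNat 2 ((2 * k).choose n) with hc_def
  have ha : a + s n = s (n - k) + s k := by
    have := kummer (n - k) k
    rw [Nat.sub_add_cancel hkn] at this
    exact this
  have hb : b + s (n + k) = s n + s k := kummer n k
  have hc : c + s k = s (2 * k - n) + s n := by
    have := kummer (2 * k - n) n
    rw [Nat.sub_add_cancel hnk, s_two_mul] at this
    exact this
  have hd : s (n + k) ≤ s (n - k) + s k :=
    calc s (n + k) = s ((n - k) + 2 * k) := by rw [show (n - k) + 2 * k = n + k by omega]
      _ ≤ s (n - k) + s (2 * k) := s_add_le _ _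
      _ = s (n - k) + s k := by rw [s_two_mul]
  have hk0 : k ≠ 0 := by omega
  have hsk : 1 ≤ s k := s_pos k hk0
  have h3 : 3 ≤ 2 * a + b + c := by
    by_cases hkn' : k = n
    · subst hkn'
      have hne : s k ≠ 1 := h1 rfl
      have hs2 : 2 ≤ s k := by omega
      have hnn : s (k + k) = s k := by
        rw [show k + k = 2 * k by ring, s_two_mul]
      have hz : s (k - k) = 0 := by simp [s_zero]
      have hd2 : s (2 * k - k) = s k := by rw [show 2 * k - k = k by omega]
      omega
    · by_cases hnk' : 2 * k = n
      · have hne : s k ≠ 1 := h2 hnk'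
        have hs2 : 2 ≤ s k := by omega
        have hz : s (2 * k - n) = 0 := by rw [show 2 * k - n = 0 by omega]; exact s_zero
        have hnken : s (n - k) = s k := by rw [show n - k = k by omega]
        have hsn : s n = s k := by rw [← hnk', s_two_mul]
        omega
      · have f1 : 1 ≤ s (n - k) := s_pos _ (by omega)
        have f2 : 1 ≤ s (2 * k - n) := s_pos _ (by omega)
        omega
  have d1 : (2:ℕ) ^ a ∣ n.choose k := pow_padicValNat_dvd
  have d2 : (2:ℕ) ^ b ∣ (n + k).choose k := pow_padicValNat_dvd
  have d3 : (2:ℕ) ^ c ∣ (2 * k).choose n := pow_padicValNat_dvd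
  have hdvd : (2:ℕ) ^ (2 * a + b + c) ∣ n.choose k ^ 2 * ((n + k).choose k) * ((2 * k).choose n) := by
    rw [show 2 * a + b + c = a * 2 + b + c by ring, pow_add, pow_add, pow_mul]
    exact mul_dvd_mul (mul_dvd_mul (pow_dvd_pow_of_dvd d1 2) d2) d3
  exact dvd_trans (by rw [show (8:ℕ) = 2 ^ 3 from rfl]; exact pow_dvd_pow 2 h3) hdvd

/-- Central binomial coefficient at a power of two is twice an odd number. -/
lemma central (m : ℕ) (hm : s m = 1) :
    ∃ w, w % 2 = 1 ∧ (2 * m).choose m = 2 * w := by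
  haveI : Fact (Nat.Prime 2) := ⟨Nat.prime_two⟩
  have hm0 : m ≠ 0 := by
    rintro rfl; simp [s_zero] at hm
  have hv : padicValNat 2 ((2 * m).choose m) = 1 := by
    have h := kummer m m
    rw [show m + m = 2 * m by ring, s_two_mul] at h
    omega
  have hC : (2 * m).choose m ≠ 0 := (Nat.choose_pos (by omega)).ne'
  have h2 : 2 ∣ (2 * m).choose m := by
    have := pow_padicValNat_dvd (p := 2) (n := (2 * m).choose m)
    rw [hv] at this
    simpa using this
  obtain ⟨w, hw⟩ := h2
  refine ⟨w, ?_, hw⟩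
  have h4 := pow_succ_padicValNat_not_dvd (p := 2) hC
  rw [hv] at h4
  have h4' : ¬ (4 ∣ (2 * m).choose m) := by
    intro hdvd
    exact h4 (by simpa [show (2:ℕ)^(1+1) = 4 from rfl] using hdvd)
  rw [hw] at h4'
  omega

lemma choose3_odd (k : ℕ) (hk : s k = 1) : (2 * k + k).choose k % 2 = 1 := by
  haveI : Fact (Nat.Prime 2) := ⟨Nat.prime_two⟩
  obtain ⟨j, rfl⟩ := s_eq_one k hk
  have h3 : s (2 * 2 ^ j + 2 ^ j) = 2 := by
    rw [show 2 * 2 ^ j + 2 ^ j = 3 * 2 ^ j by ring]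
    exact s_three_pow j
  have hv : padicValNat 2 ((2 * 2 ^ j + 2 ^ j).choose (2 ^ j)) = 0 := by
    have h := kummer (2 * 2 ^ j) (2 ^ j)
    rw [s_two_mul, s_pow, h3] at h
    omega
  have hC : (2 * 2 ^ j + 2 ^ j).choose (2 ^ j) ≠ 0 :=
    (Nat.choose_pos (by omega)).ne'
  have h4 := pow_succ_padicValNat_not_dvd (p := 2) hC
  rw [hv] at h4
  have : ¬ (2 ∣ (2 * 2 ^ j + 2 ^ j).choose (2 ^ j)) := by
    intro hdvd
    exact h4 (by simpa using hdvd)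
  omega

lemma four_mul_odd (w : ℕ) (hw : w % 2 = 1) : (4 * w) % 8 = 4 := by omega

lemma term_k_eq_n (n : ℕ) (hn : 1 ≤ n) (hs : s n = 1) :
    (n.choose n ^ 2 * ((n + n).choose n) * ((2 * n).choose n)) % 8 = 4 := by
  obtain ⟨w, hw, hC⟩ := central n hs
  rw [Nat.choose_self, show n + n = 2 * n by ring, hC,
    show 1 ^ 2 * (2 * w) * (2 * w) = 4 * (w * w) by ring]
  refine four_mul_odd _ ?_
  have : Odd (w * w) := (Nat.odd_iff.mpr hw).mul (Nat.odd_iff.mpr hw)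
  exact Nat.odd_iff.mp this

lemma term_2k_eq_n (k : ℕ) (hk : s k = 1) :
    ((2 * k).choose k ^ 2 * ((2 * k + k).choose k) * ((2 * k).choose (2 * k))) % 8 = 4 := by
  obtain ⟨w, hw, hC⟩ := central k hk
  have h3 := choose3_odd k hk
  rw [Nat.choose_self, hC,
    show (2 * w) ^ 2 * ((2 * k + k).choose k) * 1
      = 4 * (w * w * ((2 * k + k).choose k)) by ring]
  refine four_mul_odd _ ?_
  have : Odd (w * w * ((2 * k + k).choose k)) :=
    ((Nat.odd_iff.mpr hw).mul (Nat.odd_iff.mpr hw)).mul (Nat.odd_iff.mpr h3)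
  exact Nat.odd_iff.mp this

/-- Natural-number form of the term. -/
def t (n k : ℕ) : ℕ := n.choose k ^ 2 * ((n + k).choose k) * ((2 * k).choose n)

lemma cast_eq_four {a : ℕ} (h : a % 8 = 4) : (a : ZMod 8) = 4 := by
  have : (a : ZMod 8) = ((4 : ℕ) : ZMod 8) :=
    (ZMod.natCast_eq_natCast_iff' a 4 8).mpr (by omega)
  simpa using this

lemma cast_eq_zero {a : ℕ} (h : 8 ∣ a) : (a : ZMod 8) = 0 :=
  (ZMod.natCast_eq_zero_iff a 8).mpr h

/-- The sum vanishes mod 8 when `s n ≠ 1` (with `n ≥ 1`). -/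
lemma sum_zero_of_s_ne_one (n : ℕ) (hn : 1 ≤ n) (hs : s n ≠ 1) :
    (∑ k ∈ Finset.range (n + 1), ((t n k : ℕ) : ZMod 8)) = 0 := by
  refine Finset.sum_eq_zero ?_
  intro k hk
  rw [Finset.mem_range] at hk
  by_cases h2k : 2 * k < n
  · have : (2 * k).choose n = 0 := Nat.choose_eq_zero_of_lt h2k
    simp [t, this]
  · refine cast_eq_zero (eight_dvd_term hn (by omega) (by omega) (fun _ => hs) ?_)
    intro hkk
    rw [← hkk, s_two_mul] at hs
    exact hs

/-- The sum vanishes mod 8 when `n = 2 * m` with `s m = 1`. -/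
lemma sum_zero_of_even_pow (m : ℕ) (hm : s m = 1) :
    (∑ k ∈ Finset.range (2 * m + 1), ((t (2 * m) k : ℕ) : ZMod 8)) = 0 := by
  have hm0 : m ≠ 0 := by rintro rfl; simp [s_zero] at hm
  have hsn : s (2 * m) = 1 := by rw [s_two_mul]; exact hm
  have key : ∀ k ∈ Finset.range (2 * m + 1),
      ((t (2 * m) k : ℕ) : ZMod 8)
        = (if k = m then (4 : ZMod 8) else 0) + (if k = 2 * m then (4 : ZMod 8) else 0) := by
    intro k hk
    rw [Finset.mem_range] at hk
    by_cases hkm : k = m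
    · subst hkm
      rw [if_pos rfl, if_neg (by omega)]
      have h := term_2k_eq_n k hm
      have : (t (2 * k) k : ZMod 8) = 4 := by
        apply cast_eq_four
        simpa [t] using h
      simpa using this
    · by_cases hkn : k = 2 * m
      · subst hkn
        rw [if_neg (by omega), if_pos rfl]
        have h := term_k_eq_n (2 * m) (by omega) hsn
        have : (t (2 * m) (2 * m) : ZMod 8) = 4 := by
          apply cast_eq_four
          simpa [t, two_mul] using h
        simpa using this
      · rw [if_neg hkm, if_neg hkn]
        by_cases h2k : 2 * k < 2 * m
        · have : (2 * k).choose (2 * m) = 0 := Nat.choose_eq_zero_of_lt h2k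
          simp [t, this]
        · refine cast_eq_zero (eight_dvd_term (by omega) (by omega) (by omega) ?_ ?_)
          · intro h; exact absurd h hkn
          · intro h
            exfalso
            exact hkm (by omega)
  rw [Finset.sum_congr rfl key, Finset.sum_add_distrib,
    Finset.sum_ite_eq' _ m (fun _ => (4 : ZMod 8)),
    Finset.sum_ite_eq' _ (2 * m) (fun _ => (4 : ZMod 8)),
    if_pos (Finset.mem_range.mpr (by omega)), if_pos (Finset.mem_range.mpr (by omega))]
  decide

end CooperS7Aux

open CooperS7Aux in
/-- Cooper's sporadic sequence `s₇` satisfies `uₙ ≡ 4ⁿ (mod 8)`. -/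
theorem cooperS7_modEq_four_pow (n : ℕ) :
    (∑ k ∈ Finset.range (n + 1),
        (n.choose k : ℤ) ^ 2 * ((n + k).choose k : ℤ) * ((2 * k).choose n : ℤ))
      ≡ 4 ^ n [ZMOD 8] := by
  apply (ZMod.intCast_eq_intCast_iff _ _ 8).mp
  push_cast
  have hcast : ∀ k, (n.choose k : ZMod 8) ^ 2 * ((n + k).choose k : ZMod 8)
      * ((2 * k).choose n : ZMod 8) = ((t n k : ℕ) : ZMod 8) := by
    intro k
    unfold t
    push_cast
    ring
  simp only [hcast]
  rcases Nat.eq_zero_or_pos n with rfl | hn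
  · simp [t]
  · by_cases hs : s n = 1
    · obtain ⟨j, rfl⟩ := s_eq_one n hs
      cases j with
      | zero =>
        norm_num [Finset.sum_range_succ, t]
      | succ i =>
        have hpow : (4 : ZMod 8) ^ 2 ^ (i + 1) = 0 := by
          have h2 : 2 ^ (i + 1) = 2 + (2 ^ (i + 1) - 2) := by
            have : 2 ≤ 2 ^ (i + 1) := by
              calc 2 = 2 ^ 1 := rfl
                _ ≤ 2 ^ (i + 1) := Nat.pow_le_pow_right (by norm_num) (by omega)
            omega
          rw [h2, pow_add, show (4 : ZMod 8) ^ 2 = 0 by decide, zero_mul]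
        rw [hpow]
        have hm : s (2 ^ i) = 1 := s_pow i
        have := sum_zero_of_even_pow (2 ^ i) hm
        rw [show (2 : ℕ) ^ (i + 1) = 2 * 2 ^ i by ring]
        exact this
    · have hn2 : 2 ≤ n := by
        by_contra h
        have h1 : n = 1 := by omega
        subst h1
        exact hs s_one
      have hpow : (4 : ZMod 8) ^ n = 0 := by
        have h2 : n = 2 + (n - 2) := by omega
        rw [h2, pow_add, show (4 : ZMod 8) ^ 2 = 0 by decide, zero_mul]
      rw [hpow]
      exact sum_zero_of_s_ne_one n hn hs
end

section
/- Let Z_n = Σ_{k=0}^{⌊n/3⌋} (-1)^k·3^{n-3k}·C(n,3k)·C(n+k,k)·C(3k,2k)·C(2k,k) be the Almkvist–Zudilin numbers. Then for all integers n ≥ 0, Z_{2n} ≡ 3^n·Z_n (mod 8). -/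
lemma az_choose_eq (n k : ℕ) (h : 3 * k ≤ n) :
    n.choose (3 * k) * (n + k).choose k * (3 * k).choose (2 * k) * (2 * k).choose k =
      (n + k).choose (4 * k) * (4 * k).choose (2 * k) * (2 * k).choose k * (2 * k).choose k := by
  have h1 := Nat.choose_mul_factorial_mul_factorial h
  have h2 := Nat.choose_mul_factorial_mul_factorial (show k ≤ n + k by omega)
  have h3 := Nat.choose_mul_factorial_mul_factorial (show 2 * k ≤ 3 * k by omega)
  have h4 := Nat.choose_mul_factorial_mul_factorial (show k ≤ 2 * k by omega)
  have h5 := Nat.choose_mul_factorial_mul_factorial (show 4 * k ≤ n + k by omega)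
  have h6 := Nat.choose_mul_factorial_mul_factorial (show 2 * k ≤ 4 * k by omega)
  rw [show n + k - k = n by omega] at h2
  rw [show 3 * k - 2 * k = k by omega] at h3
  rw [show 2 * k - k = k by omega] at h4
  rw [show n + k - 4 * k = n - 3 * k by omega] at h5
  rw [show 4 * k - 2 * k = 2 * k by omega] at h6
  -- cast everything to ℤ
  have H1 : (n.choose (3*k) : ℤ) * (3*k).factorial * (n - 3*k).factorial = n.factorial := by
    exact_mod_cast congrArg (Nat.cast : ℕ → ℤ) h1
  have H2 : ((n+k).choose k : ℤ) * k.factorial * n.factorial = (n+k).factorial := by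
    exact_mod_cast congrArg (Nat.cast : ℕ → ℤ) h2
  have H3 : ((3*k).choose (2*k) : ℤ) * (2*k).factorial * k.factorial = (3*k).factorial := by
    exact_mod_cast congrArg (Nat.cast : ℕ → ℤ) h3
  have H4 : ((2*k).choose k : ℤ) * k.factorial * k.factorial = (2*k).factorial := by
    exact_mod_cast congrArg (Nat.cast : ℕ → ℤ) h4
  have H5 : ((n+k).choose (4*k) : ℤ) * (4*k).factorial * (n - 3*k).factorial
      = (n+k).factorial := by exact_mod_cast congrArg (Nat.cast : ℕ → ℤ) h5
  have H6 : ((4*k).choose (2*k) : ℤ) * (2*k).factorial * (2*k).factorial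
      = (4*k).factorial := by exact_mod_cast congrArg (Nat.cast : ℕ → ℤ) h6
  have hF : ((n - 3*k).factorial : ℤ) * (k.factorial : ℤ)^4 ≠ 0 := by positivity
  have key : ((n.choose (3*k) * (n+k).choose k * (3*k).choose (2*k) * (2*k).choose k : ℕ) : ℤ)
      * (((n - 3*k).factorial : ℤ) * (k.factorial : ℤ)^4)
      = (((n+k).choose (4*k) * (4*k).choose (2*k) * (2*k).choose k * (2*k).choose k : ℕ) : ℤ)
      * (((n - 3*k).factorial : ℤ) * (k.factorial : ℤ)^4) := by
    push_cast
    have L : (n.choose (3*k) : ℤ) * ((n+k).choose k) * ((3*k).choose (2*k)) * ((2*k).choose k)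
        * (((n - 3*k).factorial : ℤ) * (k.factorial : ℤ)^4) = ((n+k).factorial : ℤ) := by
      linear_combination (((n+k).choose k : ℤ) * k.factorial) * H1 + H2
        + ((n.choose (3*k) : ℤ) * ((n+k).choose k) * (n - 3*k).factorial * k.factorial) * H3
        + ((n.choose (3*k) : ℤ) * ((n+k).choose k) * ((3*k).choose (2*k)) * (n - 3*k).factorial
            * (k.factorial : ℤ)^2) * H4
    have R : ((n+k).choose (4*k) : ℤ) * ((4*k).choose (2*k)) * ((2*k).choose k)
        * ((2*k).choose k) * (((n - 3*k).factorial : ℤ) * (k.factorial : ℤ)^4)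
        = ((n+k).factorial : ℤ) := by
      linear_combination H5 + (((n+k).choose (4*k) : ℤ) * (n - 3*k).factorial) * H6
        + (((n+k).choose (4*k) : ℤ) * ((4*k).choose (2*k)) * (n - 3*k).factorial
            * (((2*k).choose k : ℤ) * (k.factorial : ℤ)^2 + (2*k).factorial)) * H4
    rw [L, R]
  exact_mod_cast mul_right_cancel₀ hF key

lemma az_term_dvd (n k : ℕ) (hk : 0 < k) (h : 3 * k ≤ n) :
    8 ∣ n.choose (3 * k) * (n + k).choose k * (3 * k).choose (2 * k) * (2 * k).choose k := by
  rw [az_choose_eq n k h]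
  have c1 : 2 ∣ (2 * k).choose k := by
    have := Nat.two_dvd_centralBinom_of_one_le hk
    rwa [Nat.centralBinom] at this
  have c2 : 2 ∣ (4 * k).choose (2 * k) := by
    have := Nat.two_dvd_centralBinom_of_one_le (show 0 < 2 * k by omega)
    rwa [Nat.centralBinom, show 2 * (2 * k) = 4 * k by ring] at this
  obtain ⟨a, ha⟩ := c1
  obtain ⟨b, hb⟩ := c2
  exact ⟨(n + k).choose (4 * k) * b * a * a, by rw [ha, hb]; ring⟩

lemma az_modEq (n : ℕ) : almkvistZudilin n ≡ 3 ^ n [ZMOD 8] := by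
  unfold almkvistZudilin
  rw [Finset.sum_range_succ']
  simp only [pow_zero, one_mul, Nat.mul_zero, Nat.choose_zero_right, Nat.add_zero,
    Nat.cast_one, mul_one, Nat.sub_zero, Nat.choose_self]
  have hdvd : (8 : ℤ) ∣ ∑ k ∈ Finset.range (n / 3),
      (-1) ^ (k + 1) * 3 ^ (n - 3 * (k + 1)) * (n.choose (3 * (k + 1)) : ℤ) *
        ((n + (k + 1)).choose (k + 1) : ℤ) * (((3 * (k + 1)).choose (2 * (k + 1))) : ℤ) *
        (((2 * (k + 1)).choose (k + 1)) : ℤ) := by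
    apply Finset.dvd_sum
    intro k hk
    have hk' : 3 * (k + 1) ≤ n := by
      have := Finset.mem_range.mp hk
      omega
    have := az_term_dvd n (k + 1) (by omega) hk'
    have h8 : (8 : ℤ) ∣ (n.choose (3 * (k + 1)) : ℤ) * ((n + (k + 1)).choose (k + 1) : ℤ) *
        (((3 * (k + 1)).choose (2 * (k + 1))) : ℤ) * (((2 * (k + 1)).choose (k + 1)) : ℤ) := by
      exact_mod_cast Int.natCast_dvd_natCast.mpr this
    have heq : (-1 : ℤ) ^ (k + 1) * 3 ^ (n - 3 * (k + 1)) * (n.choose (3 * (k + 1)) : ℤ) *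
        ((n + (k + 1)).choose (k + 1) : ℤ) * (((3 * (k + 1)).choose (2 * (k + 1))) : ℤ) *
        (((2 * (k + 1)).choose (k + 1)) : ℤ)
        = ((-1 : ℤ) ^ (k + 1) * 3 ^ (n - 3 * (k + 1))) *
          ((n.choose (3 * (k + 1)) : ℤ) * ((n + (k + 1)).choose (k + 1) : ℤ) *
          (((3 * (k + 1)).choose (2 * (k + 1))) : ℤ) *
          (((2 * (k + 1)).choose (k + 1)) : ℤ)) := by ring
    rw [heq]
    exact h8.mul_left _
  have h := Int.ModEq.add_right ((3:ℤ) ^ n) ((Int.modEq_zero_iff_dvd).mpr hdvd)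
  simpa using h

/-- For all `n ≥ 0`, the Almkvist–Zudilin numbers satisfy `Z_{2n} ≡ 3ⁿ·Zₙ (mod 8)`. -/
theorem almkvistZudilin_two_mul_modEq (n : ℕ) :
    almkvistZudilin (2 * n) ≡ 3 ^ n * almkvistZudilin n [ZMOD 8] := by
  have h1 := az_modEq (2 * n)
  have h2 := az_modEq n
  calc almkvistZudilin (2 * n) ≡ 3 ^ (2 * n) [ZMOD 8] := h1
    _ = 3 ^ n * 3 ^ n := by rw [two_mul, pow_add]
    _ ≡ 3 ^ n * almkvistZudilin n [ZMOD 8] := (h2.symm).mul_left _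
end
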